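/- arXiv:1110.5780 — 4 statements merged into one kernel-verified Lean document; each statement's English description precedes it below -/
import Mathlib

section
/- For every finite complex Borel measure μ on S^d, every r ∈ (0,1), and every y ∈ S^d, there exists δ ≥ 1 - r such that |P[μ](ry)| ≤ C · |μ|(κ(y,δ))/σ(κ(y,δ)), where C is a constant depending only on the dimension d and κ(y,δ) = {ξ ∈ S^d : ‖ξ - y‖ < δ}. -/
open Metric Set MeasureTheory
open scoped Pointwise

/-!
Write `ε = 1 - r`. For `ξ` on the sphere, `max ε ‖ξ - y‖ ≤ 2 ‖r • y - ξ‖`, so cutting the sphere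
into dyadic shells around `y` dominates the Poisson kernel at `r • y` by
`∑_{k ≤ N} c_k 1_{κ(y, 2^k ε)}` with `c_k = 2 ⬝ 4^{d+1} ε / (2^k ε)^{d+1}`. The cone over a cap of
radius `δ` lies in the `δ`-neighbourhood of a unit segment, so `σ(κ(y, δ)) ≤ A δ^d` and
`c_k σ(κ_k) ≤ 2 ⬝ 4^{d+1} A 2^{-k}`. Hence
`|P[μ](r • y)| ≤ ∑_k c_k |μ|(κ_k) ≤ (∑_k c_k σ(κ_k)) ⬝ max_k |μ|(κ_k)/σ(κ_k)`, whose first factor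
is at most `4 ⬝ 4^{d+1} A`; the cap realising the maximum is the one sought.
-/

/-- The Poisson kernel on the unit ball of `ℝ^{d+1}`. -/
noncomputable def spherePoissonKernel (d : ℕ) (x ξ : EuclideanSpace ℝ (Fin (d + 1))) : ℝ :=
  (1 - ‖x‖ ^ 2) / ‖x - ξ‖ ^ (d + 1)

/-- The normalized surface measure on the unit sphere of `ℝ^{d+1}`. -/
noncomputable def sphereMeasure (d : ℕ) :
    Measure (sphere (0 : EuclideanSpace ℝ (Fin (d + 1))) 1) :=
  ((volume : Measure (EuclideanSpace ℝ (Fin (d + 1)))).toSphere Set.univ)⁻¹ •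
    (volume : Measure (EuclideanSpace ℝ (Fin (d + 1)))).toSphere

/-- The open spherical cap of center `y` and Euclidean radius `δ`. -/
def cap (d : ℕ) (y : sphere (0 : EuclideanSpace ℝ (Fin (d + 1))) 1) (δ : ℝ) :
    Set (sphere (0 : EuclideanSpace ℝ (Fin (d + 1))) 1) :=
  {ξ | ‖(ξ : EuclideanSpace ℝ (Fin (d + 1))) - (y : EuclideanSpace ℝ (Fin (d + 1)))‖ < δ}

section SegmentNeighbourhood

variable {n : ℕ}

lemma volume_biUnion_ball_smul_single_le {δ : ℝ} (hδ : 0 ≤ δ) :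
    volume (⋃ s ∈ Ioo (0 : ℝ) 1,
        ball (s • EuclideanSpace.single (0 : Fin (n + 1)) (1 : ℝ)) δ) ≤
      ENNReal.ofReal ((1 + 2 * δ) * (2 * δ) ^ n) := by
  set box : Fin (n + 1) → Set ℝ := Fin.cons (Ioo (-δ) (1 + δ)) fun _ => Ioo (-δ) δ
  have hbox : MeasurableSet (Set.pi univ box) :=
    MeasurableSet.univ_pi fun i => Fin.cases measurableSet_Ioo (fun _ => measurableSet_Ioo) i
  have hsub : (⋃ s ∈ Ioo (0 : ℝ) 1,
      ball (s • EuclideanSpace.single (0 : Fin (n + 1)) (1 : ℝ)) δ) ⊆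
        WithLp.ofLp ⁻¹' Set.pi univ box := by
    simp only [iUnion_subset_iff]
    intro s hs x hx i _
    have hxi := (PiLp.norm_apply_le (x - s • EuclideanSpace.single 0 1) i).trans_lt
      (by rwa [mem_ball, dist_eq_norm] at hx)
    induction i using Fin.cases with
    | zero =>
      simp only [PiLp.sub_apply, PiLp.smul_apply, PiLp.single_apply, if_true,
        smul_eq_mul, mul_one, Real.norm_eq_abs, abs_lt] at hxi
      simp only [box, Fin.cons_zero, mem_Ioo]
      constructor <;> linarith [hs.1, hs.2]
    | succ j =>
      simpa [box, PiLp.single_apply, Fin.succ_ne_zero, abs_lt] using hxi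
  calc _ ≤ volume (WithLp.ofLp ⁻¹' Set.pi univ box) := measure_mono hsub
    _ = volume (Set.pi univ box) :=
      (PiLp.volume_preserving_ofLp _).measure_preimage hbox.nullMeasurableSet
    _ = ENNReal.ofReal ((1 + 2 * δ) * (2 * δ) ^ n) := by
      rw [volume_pi_pi, Fin.prod_univ_succ]
      simp only [box, Fin.cons_zero, Fin.cons_succ, Real.volume_Ioo, Finset.prod_const,
        Finset.card_univ, Fintype.card_fin]
      rw [show 1 + δ - -δ = 1 + 2 * δ by ring, show δ - -δ = 2 * δ by ring,
        ← ENNReal.ofReal_pow (by positivity), ← ENNReal.ofReal_mul (by positivity)]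

lemma volume_biUnion_ball_smul_le {v : EuclideanSpace ℝ (Fin (n + 1))} (hv : ‖v‖ = 1)
    {δ : ℝ} (hδ : 0 ≤ δ) :
    volume (⋃ s ∈ Ioo (0 : ℝ) 1, ball (s • v) δ) ≤
      ENNReal.ofReal ((1 + 2 * δ) * (2 * δ) ^ n) := by
  set e₀ := EuclideanSpace.single (0 : Fin (n + 1)) (1 : ℝ)
  set f := (ℝ ∙ (e₀ - v))ᗮ.reflection
  have hfe₀ : f e₀ = v := Submodule.reflection_sub (by simp [e₀, hv])
  have hpre : (⋃ s ∈ Ioo (0 : ℝ) 1, ball (s • v) δ) =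
      f.symm ⁻¹' ⋃ s ∈ Ioo (0 : ℝ) 1, ball (s • e₀) δ := by
    simp only [preimage_iUnion₂]
    refine iUnion₂_congr fun s _ => ?_
    ext x
    rw [mem_preimage, mem_ball, mem_ball, ← f.dist_map (f.symm x), f.apply_symm_apply,
      map_smul, hfe₀]
  have hopen : IsOpen (⋃ s ∈ Ioo (0 : ℝ) 1, ball (s • e₀) δ) :=
    isOpen_biUnion fun _ _ => isOpen_ball
  rw [hpre, f.symm.measurePreserving.measure_preimage hopen.measurableSet.nullMeasurableSet]
  exact volume_biUnion_ball_smul_single_le hδ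

end SegmentNeighbourhood

section Caps

variable {d : ℕ}

lemma cap_eq_preimage_ball (y : sphere (0 : EuclideanSpace ℝ (Fin (d + 1))) 1) (δ : ℝ) :
    cap d y δ = Subtype.val ⁻¹' ball (y : EuclideanSpace ℝ (Fin (d + 1))) δ := by
  ext ξ
  simp [cap, Subtype.dist_eq, dist_eq_norm]

lemma isOpen_cap (y : sphere (0 : EuclideanSpace ℝ (Fin (d + 1))) 1) (δ : ℝ) :
    IsOpen (cap d y δ) := by
  rw [cap_eq_preimage_ball]
  exact isOpen_ball.preimage continuous_subtype_val

lemma cone_cap_subset (y : sphere (0 : EuclideanSpace ℝ (Fin (d + 1))) 1) (δ : ℝ) :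
    Ioo (0 : ℝ) 1 • (Subtype.val '' cap d y δ) ⊆
      ⋃ s ∈ Ioo (0 : ℝ) 1, ball (s • (y : EuclideanSpace ℝ (Fin (d + 1)))) δ := by
  rintro _ ⟨s, hs, _, ⟨ξ, hξ, rfl⟩, rfl⟩
  refine mem_biUnion hs ?_
  rw [mem_ball, dist_eq_norm, ← smul_sub, norm_smul, Real.norm_eq_abs, abs_of_pos hs.1]
  exact (mul_le_of_le_one_left (norm_nonneg _) hs.2.le).trans_lt hξ

lemma toSphere_cap_le (y : sphere (0 : EuclideanSpace ℝ (Fin (d + 1))) 1) {δ : ℝ}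
    (hδ : 0 ≤ δ) :
    (volume : Measure (EuclideanSpace ℝ (Fin (d + 1)))).toSphere (cap d y δ) ≤
      (d + 1) * ENNReal.ofReal ((1 + 2 * δ) * (2 * δ) ^ d) := by
  rw [Measure.toSphere_apply' _ (isOpen_cap y δ).measurableSet, finrank_euclideanSpace_fin]
  push_cast
  gcongr
  exact (measure_mono (cone_cap_subset y δ)).trans
    (volume_biUnion_ball_smul_le (norm_eq_of_mem_sphere y) hδ)

instance : IsProbabilityMeasure (sphereMeasure d) := by
  refine ⟨?_⟩
  rw [sphereMeasure, Measure.smul_apply, smul_eq_mul]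
  exact ENNReal.inv_mul_cancel (Measure.measure_univ_ne_zero.2 (Measure.toSphere_ne_zero _))
    (measure_ne_top _ _)

instance : (sphereMeasure d).IsOpenPosMeasure :=
  Measure.isOpenPosMeasure_smul _ (ENNReal.inv_ne_zero.2 (measure_ne_top _ _))

lemma sphereMeasure_cap_pos (y : sphere (0 : EuclideanSpace ℝ (Fin (d + 1))) 1) {δ : ℝ}
    (hδ : 0 < δ) : 0 < (sphereMeasure d (cap d y δ)).toReal :=
  ENNReal.toReal_pos ((isOpen_cap y δ).measure_ne_zero _ ⟨y, by simpa [cap] using hδ⟩)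
    (measure_ne_top _ _)

lemma exists_sphereMeasure_cap_le :
    ∃ A : ℝ, 0 < A ∧ ∀ (y : sphere (0 : EuclideanSpace ℝ (Fin (d + 1))) 1) (δ : ℝ), 0 < δ →
      (sphereMeasure d (cap d y δ)).toReal ≤ A * δ ^ d := by
  set T := ((volume : Measure (EuclideanSpace ℝ (Fin (d + 1)))).toSphere univ).toReal
  refine ⟨max 1 (T⁻¹ * ((d + 1) * (3 * 2 ^ d))), by positivity, fun y δ hδ => ?_⟩
  rcases le_or_gt 1 δ with hδ1 | hδ1
  · calc (sphereMeasure d (cap d y δ)).toReal ≤ 1 :=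
          ENNReal.toReal_le_of_le_ofReal zero_le_one (by simpa using prob_le_one)
      _ ≤ max 1 (T⁻¹ * ((d + 1) * (3 * 2 ^ d))) * δ ^ d :=
          one_le_mul_of_one_le_of_one_le (le_max_left _ _) (one_le_pow₀ hδ1)
  · have hcap := ENNReal.toReal_mono (by finiteness) (toSphere_cap_le y hδ.le)
    rw [ENNReal.toReal_mul, ENNReal.toReal_ofReal (by positivity)] at hcap
    norm_cast at hcap
    calc (sphereMeasure d (cap d y δ)).toReal
        = T⁻¹ * ((volume : Measure (EuclideanSpace ℝ (Fin (d + 1)))).toSphere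
            (cap d y δ)).toReal := by
          rw [sphereMeasure, Measure.smul_apply, smul_eq_mul, ENNReal.toReal_mul,
            ENNReal.toReal_inv]
      _ ≤ T⁻¹ * ((d + 1) * ((1 + 2 * δ) * (2 * δ) ^ d)) := by
          gcongr
          simpa using hcap
      _ ≤ T⁻¹ * ((d + 1) * (3 * 2 ^ d)) * δ ^ d := by
          have h3 : 1 + 2 * δ ≤ 3 := by linarith
          calc _ = T⁻¹ * (d + 1) * 2 ^ d * δ ^ d * (1 + 2 * δ) := by ring
            _ ≤ T⁻¹ * (d + 1) * 2 ^ d * δ ^ d * 3 := by gcongr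
            _ = _ := by ring
      _ ≤ _ := by gcongr; exact le_max_right _ _

end Caps

lemma exists_lt_two_pow_mul_le {ε t : ℝ} {N : ℕ} (hε : 0 < ε) (ht : t < 2 ^ N * ε) :
    ∃ k ≤ N, t < 2 ^ k * ε ∧ 2 ^ k * ε ≤ 2 * max ε t := by
  have hex : ∃ k, t < 2 ^ k * ε := ⟨N, ht⟩
  refine ⟨Nat.find hex, Nat.find_min' hex ht, Nat.find_spec hex, ?_⟩
  obtain h0 | ⟨j, hj⟩ : Nat.find hex = 0 ∨ ∃ j, Nat.find hex = j + 1 := by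
    cases Nat.find hex <;> simp
  · rw [h0, pow_zero, one_mul]
    linarith [le_max_left ε t]
  · have hprev : 2 ^ j * ε ≤ t := not_lt.1 (Nat.find_min hex (by omega))
    rw [hj, pow_succ]
    linarith [le_max_right ε t]

lemma Finset.exists_sum_mul_le_sum_mul_mul_div {ι : Type*} {s : Finset ι} (hs : s.Nonempty)
    {w a b : ι → ℝ} (hw : ∀ i ∈ s, 0 ≤ w i) (hb : ∀ i ∈ s, 0 < b i) :
    ∃ i ∈ s, ∑ j ∈ s, w j * a j ≤ (∑ j ∈ s, w j * b j) * (a i / b i) := by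
  obtain ⟨i, hi, hmax⟩ := s.exists_max_image (fun j => a j / b j) hs
  refine ⟨i, hi, ?_⟩
  rw [Finset.sum_mul]
  refine Finset.sum_le_sum fun j hj => ?_
  rw [mul_assoc]
  gcongr
  · exact hw j hj
  · exact (div_le_iff₀ (hb j hj)).1 (hmax j hj) |>.trans_eq (mul_comm _ _)

lemma integral_le_sum_mul_measureReal {X ι : Type*} [MeasurableSpace X] {ν : Measure X}
    [IsFiniteMeasure ν] {f : X → ℝ} {s : Finset ι} {A : ι → Set X} {c : ι → ℝ}
    (hA : ∀ i, MeasurableSet (A i)) (hf0 : ∀ x, 0 ≤ f x)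
    (hf : ∀ x, f x ≤ ∑ i ∈ s, (A i).indicator (fun _ => c i) x) :
    ∫ x, f x ∂ν ≤ ∑ i ∈ s, c i * (ν (A i)).toReal := by
  have hint : ∀ i ∈ s, Integrable ((A i).indicator fun _ => c i) ν :=
    fun i _ => (integrable_const (c i)).indicator (hA i)
  calc ∫ x, f x ∂ν ≤ ∫ x, ∑ i ∈ s, (A i).indicator (fun _ => c i) x ∂ν :=
        integral_mono_of_nonneg (.of_forall hf0) (integrable_finsetSum s hint) (.of_forall hf)
    _ = ∑ i ∈ s, c i * (ν (A i)).toReal := by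
        rw [integral_finsetSum s hint]
        refine Finset.sum_congr rfl fun i _ => ?_
        rw [integral_indicator_const _ (hA i), smul_eq_mul, mul_comm, measureReal_def]

lemma norm_integral_ofReal_mul_le {X : Type*} [MeasurableSpace X] {ν : Measure X}
    {f : X → ℝ} {g : X → ℂ} (hf : ∀ x, 0 ≤ f x) (hg : ∀ x, ‖g x‖ = 1) :
    ‖∫ x, (f x : ℂ) * g x ∂ν‖ ≤ ∫ x, f x ∂ν :=
  (norm_integral_le_integral_norm _).trans_eq <| integral_congr_ae <| .of_forall fun x => by
    simp [hg x, abs_of_nonneg (hf x)]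

lemma sum_dyadic_mul_le_of_le_pow {d N : ℕ} {ε K A : ℝ} (hε : 0 < ε) (hK : 0 ≤ K)
    (hA : 0 ≤ A) {m : ℝ → ℝ} (hm : ∀ k, m (2 ^ k * ε) ≤ A * (2 ^ k * ε) ^ d) :
    ∑ k ∈ Finset.range (N + 1), K * ε / (2 ^ k * ε) ^ (d + 1) * m (2 ^ k * ε) ≤ 2 * K * A := by
  calc ∑ k ∈ Finset.range (N + 1), K * ε / (2 ^ k * ε) ^ (d + 1) * m (2 ^ k * ε)
      ≤ ∑ k ∈ Finset.range (N + 1), K * A * (1 / 2) ^ k := by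
        refine Finset.sum_le_sum fun k _ => ?_
        calc _ ≤ K * ε / (2 ^ k * ε) ^ (d + 1) * (A * (2 ^ k * ε) ^ d) := by
              gcongr
              exact hm k
          _ = K * A * (1 / 2) ^ k := by
              rw [one_div, inv_pow]
              field_simp
              ring
    _ = K * A * ∑ k ∈ Finset.range (N + 1), (1 / 2 : ℝ) ^ k := by rw [Finset.mul_sum]
    _ ≤ K * A * 2 := by
        have : 0 ≤ K * A := mul_nonneg hK hA
        gcongr
        exact sum_geometric_two_le _
    _ = 2 * K * A := by ring

section PoissonKernel

variable {d : ℕ}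

lemma spherePoissonKernel_nonneg {x : EuclideanSpace ℝ (Fin (d + 1))} (hx : ‖x‖ ≤ 1)
    (ξ : EuclideanSpace ℝ (Fin (d + 1))) : 0 ≤ spherePoissonKernel d x ξ :=
  div_nonneg (by nlinarith [norm_nonneg x]) (by positivity)

lemma max_le_two_mul_norm_smul_sub {y ξ : EuclideanSpace ℝ (Fin (d + 1))} (hy : ‖y‖ = 1)
    (hξ : ‖ξ‖ = 1) {r : ℝ} (hr : r ∈ Ioo (0 : ℝ) 1) :
    max (1 - r) ‖ξ - y‖ ≤ 2 * ‖r • y - ξ‖ := by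
  have hnorm : ‖r • y‖ = r := by rw [norm_smul, hy, Real.norm_of_nonneg hr.1.le, mul_one]
  have hboundary : 1 - r ≤ ‖r • y - ξ‖ := by
    simpa [hξ, hnorm, norm_sub_rev] using norm_sub_norm_le ξ (r • y)
  have hry : ‖r • y - y‖ = 1 - r := by
    rw [show r • y - y = (r - 1) • y by rw [sub_smul, one_smul], norm_smul, hy, mul_one,
      Real.norm_eq_abs, abs_of_neg (by linarith [hr.2]), neg_sub]
  have htriangle := norm_sub_le_norm_sub_add_norm_sub ξ (r • y) y
  rw [norm_sub_rev ξ (r • y), hry] at htriangle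
  exact max_le (by linarith [norm_nonneg (r • y - ξ)]) (by linarith)

lemma spherePoissonKernel_smul_le {y ξ : EuclideanSpace ℝ (Fin (d + 1))} (hy : ‖y‖ = 1)
    (hξ : ‖ξ‖ = 1) {r : ℝ} (hr : r ∈ Ioo (0 : ℝ) 1) :
    spherePoissonKernel d (r • y) ξ ≤ 2 * (1 - r) / (max (1 - r) ‖ξ - y‖ / 2) ^ (d + 1) := by
  have hnorm : ‖r • y‖ = r := by rw [norm_smul, hy, Real.norm_of_nonneg hr.1.le, mul_one]
  have hmax : 0 < max (1 - r) ‖ξ - y‖ / 2 := by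
    have := le_max_left (1 - r) ‖ξ - y‖
    linarith [hr.2]
  rw [spherePoissonKernel, hnorm]
  refine div_le_div₀ (by linarith [hr.2]) (by nlinarith [hr.1, hr.2]) (by positivity)
    (pow_le_pow_left₀ hmax.le ?_ _)
  linarith [max_le_two_mul_norm_smul_sub hy hξ hr]

lemma spherePoissonKernel_le_sum_indicator_cap
    (y : sphere (0 : EuclideanSpace ℝ (Fin (d + 1))) 1) {r : ℝ} (hr : r ∈ Ioo (0 : ℝ) 1)
    {N : ℕ} (hN : 2 < 2 ^ N * (1 - r)) (ξ : sphere (0 : EuclideanSpace ℝ (Fin (d + 1))) 1) :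
    spherePoissonKernel d (r • (y : EuclideanSpace ℝ (Fin (d + 1)))) ξ ≤
      ∑ k ∈ Finset.range (N + 1), (cap d y (2 ^ k * (1 - r))).indicator
        (fun _ => 2 * 4 ^ (d + 1) * (1 - r) / (2 ^ k * (1 - r)) ^ (d + 1)) ξ := by
  have hε : 0 < 1 - r := by linarith [hr.2]
  have hdiam : ‖(ξ : EuclideanSpace ℝ (Fin (d + 1))) - y‖ ≤ 2 := by
    simpa [norm_eq_of_mem_sphere, one_add_one_eq_two] using
      norm_sub_le (ξ : EuclideanSpace ℝ (Fin (d + 1))) y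
  obtain ⟨k, hkN, hkcap, hkmax⟩ := exists_lt_two_pow_mul_le hε (hdiam.trans_lt hN)
  refine le_trans ?_ (Finset.single_le_sum (fun j _ => indicator_nonneg
    (fun _ _ => by positivity) ξ) (Finset.mem_range.2 (Nat.lt_succ_of_le hkN)))
  rw [indicator_of_mem (show ξ ∈ cap d y (2 ^ k * (1 - r)) from hkcap)]
  calc _ ≤ 2 * (1 - r) / (2 ^ k * (1 - r) / 4) ^ (d + 1) :=
        (spherePoissonKernel_smul_le (norm_eq_of_mem_sphere y) (norm_eq_of_mem_sphere ξ) hr).trans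
          (div_le_div_of_nonneg_left (by positivity) (by positivity)
            (pow_le_pow_left₀ (by positivity) (by linarith) _))
    _ = 2 * 4 ^ (d + 1) * (1 - r) / (2 ^ k * (1 - r)) ^ (d + 1) := by
        rw [div_pow]
        field_simp

end PoissonKernel

/-- A finite complex Borel measure `μ` on the sphere is encoded through its polar
decomposition `dμ = g d|μ|`, where `ν = |μ|` is a finite positive measure
and `g` is a measurable function of modulus `1`. -/
theorem poissonIntegral_le_average_cap (d : ℕ) :
    ∃ C : ℝ, 0 < C ∧
      ∀ (ν : Measure (sphere (0 : EuclideanSpace ℝ (Fin (d + 1))) 1)),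
        IsFiniteMeasure ν →
      ∀ g : sphere (0 : EuclideanSpace ℝ (Fin (d + 1))) 1 → ℂ,
        Measurable g → (∀ ξ, ‖g ξ‖ = 1) →
      ∀ r ∈ Ioo (0 : ℝ) 1, ∀ y : sphere (0 : EuclideanSpace ℝ (Fin (d + 1))) 1,
        ∃ δ : ℝ, 1 - r ≤ δ ∧
          ‖∫ ξ, (spherePoissonKernel d (r • (y : EuclideanSpace ℝ (Fin (d + 1)))) ξ : ℂ) * g ξ ∂ν‖
            ≤ C * (ν (cap d y δ)).toReal / ((sphereMeasure d) (cap d y δ)).toReal := by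
  obtain ⟨A, hA, hcap⟩ := exists_sphereMeasure_cap_le (d := d)
  set K : ℝ := 2 * 4 ^ (d + 1)
  refine ⟨2 * K * A, by positivity, fun ν _ g _ hg r hr y => ?_⟩
  have hε : 0 < 1 - r := by linarith [hr.2]
  obtain ⟨N, hN⟩ : ∃ N : ℕ, 2 < 2 ^ N * (1 - r) := by
    obtain ⟨N, hN⟩ := pow_unbounded_of_one_lt (2 / (1 - r)) one_lt_two
    exact ⟨N, (div_lt_iff₀ hε).1 hN⟩
  obtain ⟨k, hk, hmax⟩ := Finset.exists_sum_mul_le_sum_mul_mul_div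
    (w := fun k => K * (1 - r) / (2 ^ k * (1 - r)) ^ (d + 1))
    (a := fun k => (ν (cap d y (2 ^ k * (1 - r)))).toReal)
    (b := fun k => (sphereMeasure d (cap d y (2 ^ k * (1 - r)))).toReal)
    (Finset.nonempty_range_add_one (n := N)) (fun _ _ => by positivity)
    (fun _ _ => sphereMeasure_cap_pos y (by positivity))
  refine ⟨2 ^ k * (1 - r), le_mul_of_one_le_left hε.le (one_le_pow₀ one_le_two), ?_⟩
  have hx : ‖r • (y : EuclideanSpace ℝ (Fin (d + 1)))‖ ≤ 1 := by
    rw [norm_smul, norm_eq_of_mem_sphere y, mul_one, Real.norm_of_nonneg hr.1.le]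
    exact hr.2.le
  calc _ ≤ ∫ ξ, spherePoissonKernel d (r • (y : EuclideanSpace ℝ (Fin (d + 1)))) ξ ∂ν :=
        norm_integral_ofReal_mul_le (fun _ => spherePoissonKernel_nonneg hx _) hg
    _ ≤ ∑ k ∈ Finset.range (N + 1),
          K * (1 - r) / (2 ^ k * (1 - r)) ^ (d + 1) * (ν (cap d y (2 ^ k * (1 - r)))).toReal :=
        integral_le_sum_mul_measureReal (fun _ => (isOpen_cap y _).measurableSet)
          (fun _ => spherePoissonKernel_nonneg hx _)
          (spherePoissonKernel_le_sum_indicator_cap y hr hN)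
    _ ≤ _ := hmax
    _ ≤ 2 * K * A * ((ν (cap d y (2 ^ k * (1 - r)))).toReal /
          (sphereMeasure d (cap d y (2 ^ k * (1 - r)))).toReal) := by
        gcongr
        exact sum_dyadic_mul_le_of_le_pow (m := fun δ => (sphereMeasure d (cap d y δ)).toReal) hε
          (by positivity) hA.le fun j => hcap y _ (by positivity)
    _ = _ := (mul_div_assoc _ _ _).symm
end

section
/- There exists a constant C > 0 (depending only on d) such that for every r ∈ (1/2, 1) and every y ∈ S^d, the integral of the Poisson kernel over the spherical cap of radius 1-r centered at y satisfies ∫_{κ(y,1-r)} P(ry, ξ) dσ(ξ) ≥ C. -/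
open Metric Set MeasureTheory

/-- The Poisson kernel on the unit ball of `ℝ^{d+1}`. -/
noncomputable def poissonKernelBall (d : ℕ) (x ξ : EuclideanSpace ℝ (Fin (d + 1))) : ℝ :=
  (1 - ‖x‖ ^ 2) / ‖x - ξ‖ ^ (d + 1)

/-! On the cap `κ(y, 1 - r)` every `ξ` lies within `2(1 - r)` of `r y`, while `1 - ‖r y‖² ≥ 1 - r`,
so the Poisson kernel is at least `1 / (2^(d+1) (1 - r)^d)` there. It therefore suffices that
`σ(κ(y, δ)) ≳ δ^d`. The measure of a cap is the normalized volume of the cone over it, and this cone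
contains `⌊1/δ⌋` disjoint balls of radius `δ/4` strung along the segment from `y/2` to `y`,
whose total volume is `≳ δ^(d+1) / δ`. -/

open scoped Pointwise ENNReal

section NormedSpace

variable {E : Type*} [NormedAddCommGroup E]

theorem one_sub_norm_le_norm_sub_of_mem_sphere (x : E) (ξ : sphere (0 : E) 1) :
    1 - ‖x‖ ≤ ‖x - ξ‖ := by
  simpa [norm_eq_of_mem_sphere ξ, norm_sub_rev x] using norm_sub_norm_le (ξ : E) x

variable [NormedSpace ℝ E]

theorem norm_smul_of_norm_eq_one {y : E} (hy : ‖y‖ = 1) {r : ℝ} (hr : 0 ≤ r) : ‖r • y‖ = r := by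
  rw [norm_smul, hy, mul_one, Real.norm_of_nonneg hr]

theorem norm_smul_sub_le_of_norm_sub_le {y ξ : E} (hy : ‖y‖ = 1) {r : ℝ} (hr : r ≤ 1)
    (hξ : ‖ξ - y‖ ≤ 1 - r) : ‖r • y - ξ‖ ≤ 2 * (1 - r) :=
  calc ‖r • y - ξ‖ ≤ ‖r • y - y‖ + ‖y - ξ‖ := norm_sub_le_norm_sub_add_norm_sub _ _ _
    _ = (1 - r) + ‖ξ - y‖ := by
      rw [show r • y - y = (r - 1) • y by rw [sub_smul, one_smul], norm_smul, hy, mul_one,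
        Real.norm_of_nonpos (by linarith), norm_sub_rev, neg_sub]
    _ ≤ 2 * (1 - r) := by linarith

theorem ball_smul_subset_Ioo_smul_ball_inter_sphere {y : E} (hy : ‖y‖ = 1) {t ρ : ℝ}
    (ht₀ : 1 / 2 ≤ t - ρ) (ht₁ : t + ρ ≤ 1) :
    ball (t • y) ρ ⊆ Ioo (0 : ℝ) 1 • (ball y (4 * ρ) ∩ sphere 0 1) := by
  intro x hx
  rw [mem_ball, dist_eq_norm] at hx
  have hρ : 0 < ρ := (norm_nonneg _).trans_lt hx
  have hty : ‖t • y‖ = t := norm_smul_of_norm_eq_one hy (by linarith)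
  have hxt : |‖x‖ - t| < ρ := by
    rw [← hty]; exact (abs_norm_sub_norm_le x (t • y)).trans_lt hx
  obtain ⟨hx₀, hx₁⟩ := abs_lt.1 hxt
  have hx_pos : 0 < ‖x‖ := by linarith
  have hradial : ‖x - ‖x‖ • y‖ < 2 * ρ :=
    calc ‖x - ‖x‖ • y‖ = ‖(x - t • y) + (t - ‖x‖) • y‖ := by rw [sub_smul]; abel_nf
      _ ≤ ‖x - t • y‖ + |t - ‖x‖| := by
        grw [norm_add_le, norm_smul, hy, mul_one, Real.norm_eq_abs]
      _ < 2 * ρ := by rw [abs_sub_comm]; linarith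
  have hnormalize : ‖x‖⁻¹ • x - y = ‖x‖⁻¹ • (x - ‖x‖ • y) := by
    rw [smul_sub, smul_smul, inv_mul_cancel₀ hx_pos.ne', one_smul]
  refine ⟨‖x‖, ⟨hx_pos, by linarith⟩, ‖x‖⁻¹ • x, ⟨?_, ?_⟩, smul_inv_smul₀ hx_pos.ne' x⟩
  · rw [mem_ball, dist_eq_norm, hnormalize, norm_smul, norm_inv, norm_norm, inv_mul_eq_div,
      div_lt_iff₀ hx_pos]
    nlinarith
  · simp [norm_smul, hx_pos.ne']

namespace MeasureTheory.Measure

variable [MeasurableSpace E] [BorelSpace E] (μ : Measure E) [μ.IsAddHaarMeasure]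

theorem measure_biUnion_ball_smul_eq (y : E) (hy : ‖y‖ = 1) (a ρ : ℝ) (N : ℕ) :
    μ (⋃ k ∈ Finset.range N, ball ((a + 2 * k * ρ) • y) ρ) = N * μ (ball 0 ρ) := by
  have hdisj : (Finset.range N : Set ℕ).PairwiseDisjoint
      fun k : ℕ ↦ ball ((a + 2 * k * ρ) • y) ρ := by
    intro j _ k _ hjk
    apply ball_disjoint_ball
    have hjk' : (1 : ℝ) ≤ |(j : ℝ) - k| := by
      exact_mod_cast Int.one_le_abs (sub_ne_zero.2 (Int.ofNat_inj.not.2 hjk))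
    rw [dist_eq_norm, ← sub_smul, norm_smul, hy, mul_one, Real.norm_eq_abs,
      show a + 2 * j * ρ - (a + 2 * k * ρ) = 2 * ρ * (j - k) by ring, abs_mul, abs_mul,
      abs_two]
    nlinarith [le_abs_self ρ, abs_nonneg ρ]
  rw [measure_biUnion_finset hdisj fun _ _ ↦ measurableSet_ball]
  simp [Measure.addHaar_ball_center]

variable [FiniteDimensional ℝ E]

theorem ofReal_mul_toSphere_univ_le_toSphere_ball {n : ℕ} (hn : Module.finrank ℝ E = n + 1)
    {ε : ℝ} (hε₀ : 0 < ε) (hε₁ : ε ≤ 1) (x : sphere (0 : E) 1) :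
    ENNReal.ofReal (ε ^ n / (2 * 4 ^ (n + 1))) * μ.toSphere univ ≤ μ.toSphere (ball x ε) := by
  set N := ⌊1 / ε⌋₊
  have hN : 1 / (2 * ε) < N := by
    have := Nat.div_two_lt_floor (one_le_one_div hε₀ hε₁)
    rwa [div_div, mul_comm] at this
  have hN' : N * ε ≤ 1 := (le_div_iff₀ hε₀).1 (Nat.floor_le (by positivity))
  have hballs : ∀ k ∈ Finset.range N, ball ((1 / 2 + ε / 4 + 2 * k * (ε / 4)) • (x : E)) (ε / 4)
      ⊆ Ioo (0 : ℝ) 1 • ((↑) '' ball x ε) := by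
    intro k hk
    have hk : (k : ℝ) + 1 ≤ N := by exact_mod_cast Finset.mem_range.1 hk
    refine (ball_smul_subset_Ioo_smul_ball_inter_sphere (norm_eq_of_mem_sphere x)
      (by nlinarith [k.cast_nonneg (α := ℝ)]) (by nlinarith)).trans ?_
    rw [Subtype.image_ball, ofPred_mem_eq, show 4 * (ε / 4) = ε by ring]
  have hcount : ENNReal.ofReal (ε ^ n / (2 * 4 ^ (n + 1))) ≤
      N * ENNReal.ofReal ((ε / 4) ^ (n + 1)) := by
    rw [← ENNReal.ofReal_natCast, ← ENNReal.ofReal_mul (by positivity)]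
    refine ENNReal.ofReal_le_ofReal ?_
    calc ε ^ n / (2 * 4 ^ (n + 1)) = 1 / (2 * ε) * (ε / 4) ^ (n + 1) := by
          rw [div_pow]; field_simp; ring
      _ ≤ N * (ε / 4) ^ (n + 1) := by gcongr
  calc ENNReal.ofReal (ε ^ n / (2 * 4 ^ (n + 1))) * μ.toSphere univ
      ≤ (n + 1) * (N * μ (ball 0 (ε / 4))) := by
        rw [μ.toSphere_apply_univ, μ.addHaar_ball_of_pos 0 (by positivity : 0 < ε / 4), hn]
        grw [hcount]
        exact le_of_eq (by push_cast; ring)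
    _ = (n + 1) * μ (⋃ k ∈ Finset.range N,
          ball ((1 / 2 + ε / 4 + 2 * k * (ε / 4)) • (x : E)) (ε / 4)) := by
        rw [measure_biUnion_ball_smul_eq μ _ (norm_eq_of_mem_sphere x)]
    _ ≤ μ.toSphere (ball x ε) := by
        rw [μ.toSphere_apply' measurableSet_ball, hn]
        push_cast
        gcongr
        exact iUnion₂_subset hballs

end MeasureTheory.Measure

end NormedSpace

section Sphere

variable {d : ℕ}

instance inst_s5 : IsProbabilityMeasure (sphereMeasure d) := by
  have : NeZero (volume : Measure (EuclideanSpace ℝ (Fin (d + 1)))).toSphere :=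
    ⟨Measure.toSphere_ne_zero _⟩
  unfold sphereMeasure
  infer_instance

theorem cap_eq_ball (y : sphere (0 : EuclideanSpace ℝ (Fin (d + 1))) 1) (δ : ℝ) :
    cap d y δ = ball y δ := by
  ext ξ
  rw [mem_ball, Subtype.dist_eq, dist_eq_norm]
  rfl

theorem ofReal_le_sphereMeasure_cap (y : sphere (0 : EuclideanSpace ℝ (Fin (d + 1))) 1) {δ : ℝ}
    (hδ₀ : 0 < δ) (hδ₁ : δ ≤ 1) :
    ENNReal.ofReal (δ ^ d / (2 * 4 ^ (d + 1))) ≤ sphereMeasure d (cap d y δ) := by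
  have hT₀ := Measure.toSphere_ne_zero (volume : Measure (EuclideanSpace ℝ (Fin (d + 1))))
  rw [sphereMeasure, cap_eq_ball, Measure.smul_apply, smul_eq_mul, ← ENNReal.div_eq_inv_mul,
    ENNReal.le_div_iff_mul_le (.inl (Measure.measure_univ_ne_zero.2 hT₀))
      (.inl (measure_ne_top _ _))]
  exact volume.ofReal_mul_toSphere_univ_le_toSphere_ball
    (finrank_euclideanSpace_fin (𝕜 := ℝ)) hδ₀ hδ₁ y

theorem continuous_poissonKernelBall {x : EuclideanSpace ℝ (Fin (d + 1))} (hx : ‖x‖ < 1) :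
    Continuous fun ξ : sphere (0 : EuclideanSpace ℝ (Fin (d + 1))) 1 ↦ poissonKernelBall d x ξ :=
  continuous_const.div ((continuous_const.sub continuous_subtype_val).norm.pow _) fun ξ ↦
    pow_ne_zero _ (by linarith [one_sub_norm_le_norm_sub_of_mem_sphere x ξ])

theorem one_div_le_poissonKernelBall_smul (y : sphere (0 : EuclideanSpace ℝ (Fin (d + 1))) 1)
    {r : ℝ} (hr₀ : 0 ≤ r) (hr₁ : r < 1) {ξ} (hξ : ξ ∈ cap d y (1 - r)) :
    1 / (2 ^ (d + 1) * (1 - r) ^ d) ≤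
      poissonKernelBall d (r • (y : EuclideanSpace ℝ (Fin (d + 1)))) ξ := by
  have hry := norm_smul_of_norm_eq_one (norm_eq_of_mem_sphere y) hr₀
  have hlower := one_sub_norm_le_norm_sub_of_mem_sphere (r • (y : EuclideanSpace ℝ (Fin (d + 1)))) ξ
  have hupper := norm_smul_sub_le_of_norm_sub_le (norm_eq_of_mem_sphere y) hr₁.le (le_of_lt hξ)
  have hδ : 0 < 1 - r := by linarith
  rw [hry] at hlower
  calc 1 / (2 ^ (d + 1) * (1 - r) ^ d) = (1 - r) / (2 * (1 - r)) ^ (d + 1) := by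
        rw [mul_pow, pow_succ (1 - r)]; field_simp
    _ ≤ (1 - r ^ 2) / ‖r • (y : EuclideanSpace ℝ (Fin (d + 1))) - ξ‖ ^ (d + 1) :=
        div_le_div₀ (by nlinarith) (by nlinarith) (pow_pos (hδ.trans_le hlower) _)
          (pow_le_pow_left₀ (hδ.le.trans hlower) hupper _)
    _ = poissonKernelBall d (r • (y : EuclideanSpace ℝ (Fin (d + 1)))) ξ := by
        rw [poissonKernelBall, hry]

end Sphere

theorem integral_poissonKernel_cap_ge (d : ℕ) :
    ∃ C : ℝ, 0 < C ∧
      ∀ r ∈ Ioo (1 / 2 : ℝ) 1, ∀ y : sphere (0 : EuclideanSpace ℝ (Fin (d + 1))) 1,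
        C ≤ ∫ ξ in cap d y (1 - r),
              poissonKernelBall d (r • (y : EuclideanSpace ℝ (Fin (d + 1)))) ξ
              ∂(sphereMeasure d) := by
  refine ⟨1 / (2 * 8 ^ (d + 1)), by positivity, ?_⟩
  rintro r ⟨hr₀, hr₁⟩ y
  have hδ₀ : 0 < 1 - r := by linarith
  have hcap : (1 - r) ^ d / (2 * 4 ^ (d + 1)) ≤ (sphereMeasure d).real (cap d y (1 - r)) :=
    (ENNReal.ofReal_le_iff_le_toReal (measure_ne_top _ _)).1
      (ofReal_le_sphereMeasure_cap y hδ₀ (by linarith))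
  have hnorm : ‖r • (y : EuclideanSpace ℝ (Fin (d + 1)))‖ < 1 :=
    (norm_smul_of_norm_eq_one (norm_eq_of_mem_sphere y) (by linarith)).trans_lt hr₁
  calc 1 / (2 * 8 ^ (d + 1))
      = 1 / (2 ^ (d + 1) * (1 - r) ^ d) * ((1 - r) ^ d / (2 * 4 ^ (d + 1))) := by
        rw [show (8 : ℝ) = 2 * 4 by norm_num, mul_pow]; field_simp
    _ ≤ 1 / (2 ^ (d + 1) * (1 - r) ^ d) * (sphereMeasure d).real (cap d y (1 - r)) := by
        gcongr
    _ ≤ _ := setIntegral_ge_of_const_le_real (cap_eq_ball y _ ▸ measurableSet_ball)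
        (measure_ne_top _ _) (fun ξ ↦ one_div_le_poissonKernelBall_smul y (by linarith) hr₁)
        ((continuous_poissonKernelBall hnorm).integrable_of_hasCompactSupport
          (.of_compactSpace _)).integrableOn
end

section
/- Let μ be a finite complex Borel measure on S^d, let τ : (0,1) → (0,∞) be nonincreasing with τ(x) → ∞ as x → 0⁺, and let φ : (0,∞) → (0,∞) be a dimension function (continuous, nondecreasing, with φ(0⁺) = 0) satisfying φ(s) = O(τ(s)·s^d). Then the set E(τ,μ) = {y ∈ S^d : limsup_{r→1} |P[μ](ry)|/τ(1-r) = +∞} has φ-Hausdorff measure zero: H^φ(E(τ,μ)) = 0. -/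
/-!
Cutting the sphere into the shells around `y` of radii `2^k (1 - r)` bounds the Poisson integral
by a maximal function: `|P[μ](ry)| ≤ 2^(2d+4) |μ|(B(y,t)) / t^d` for some `t ≥ 1 - r`. So at a
point `y` of `E(τ,μ)` there are, for every `L`, arbitrarily small `δ ≤ t` with
`|μ|(B(y,t)) > L τ(δ) t^d`; as `τ` is nonincreasing and `φ(s) = O(τ(s) s^d)`, the right-hand
side dominates any multiple `c φ(8t)`. A Vitali covering of `E(τ,μ)` by such balls `B(y,t)`,
enlarged four times, gives `H^φ(E(τ,μ)) ≤ |μ|(S^d) / c` for every `c`.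

For `d = 0` small balls are points, whose `H^φ`-gauge is the unconstrained value `φ 0`, so the
covering argument fails; but there the maximal function is at most `|μ|(S^0)`, and `E(τ,μ)` is
empty because `τ ≥ 1` near `0`.
-/

open Metric Set MeasureTheory Filter

/-- The Poisson kernel on the unit ball of `ℝ^{d+1}`. -/
noncomputable def poissonKernelSphere (d : ℕ) (x ξ : EuclideanSpace ℝ (Fin (d + 1))) : ℝ :=
  (1 - ‖x‖ ^ 2) / ‖x - ξ‖ ^ (d + 1)

open scoped ENNReal Topology

section MassDistribution

variable {X : Type*} [MetricSpace X]

theorem diam_closedBall_pos [PerfectSpace X] (y : X) {t : ℝ} (ht : 0 < t) :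
    0 < diam (closedBall y t) := by
  obtain ⟨z, ⟨hz, -⟩, hzy⟩ :=
    accPt_iff_nhds.mp (PerfectSpace.univ_preperfect y (mem_univ y)) (ball y t) (ball_mem_nhds y ht)
  calc 0 < dist z y := dist_pos.mpr hzy
    _ ≤ diam (closedBall y t) := dist_le_diam_of_mem isBounded_closedBall
        (ball_subset_closedBall hz) (mem_closedBall_self ht.le)

theorem ofReal_toReal_ediam_closedBall_le [PerfectSpace X] {φ : ℝ → ℝ} (hφ : MonotoneOn φ (Ioi 0))
    (y : X) {t : ℝ} (ht : 0 < t) :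
    ENNReal.ofReal (φ (ediam (closedBall y (4 * t))).toReal) ≤ ENNReal.ofReal (φ (8 * t)) := by
  have hpos : 0 < diam (closedBall y (4 * t)) := diam_closedBall_pos y (by positivity)
  have hle : diam (closedBall y (4 * t)) ≤ 8 * t := by
    linarith [diam_closedBall (x := y) (by positivity : 0 ≤ 4 * t)]
  exact ENNReal.ofReal_le_ofReal (hφ hpos (hpos.trans_le hle) hle)

variable [MeasurableSpace X] [BorelSpace X] (ν : Measure X)

theorem exists_countable_disjoint_closedBall_cover [SFinite ν] (A : Set X) (T : X → ℝ)
    {R : ℝ} (hT : ∀ a ∈ A, T a ≤ R ∧ 0 < ν (closedBall a (T a))) :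
    ∃ u ⊆ A, u.Countable ∧ (u.PairwiseDisjoint fun b => closedBall b (T b)) ∧
      A ⊆ ⋃ b : u, closedBall (b : X) (4 * T b) := by
  obtain ⟨u, huA, hdisj, hcover⟩ := Vitali.exists_disjoint_subfamily_covering_enlargement_closedBall
    A id T R (fun a ha => (hT a ha).1) 4 (by norm_num)
  refine ⟨u, huA, ?_, hdisj, fun a ha => ?_⟩
  · have hpos : ∀ b : u, 0 < ν (closedBall (b : X) (T b)) := fun b => (hT b (huA b.2)).2
    have hcount := Measure.countable_meas_pos_of_disjoint_iUnion (μ := ν)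
      (fun b : u => measurableSet_closedBall) (hdisj.subtype _ _)
    simpa only [id, hpos, ofPred_true, countable_univ_iff, countable_coe_iff] using hcount
  · obtain ⟨b, hb, hsub⟩ := hcover a ha
    have hTa : 0 ≤ T a := nonempty_closedBall.mp (nonempty_of_measure_ne_zero (hT a ha).2.ne')
    exact mem_iUnion.mpr ⟨⟨b, hb⟩, hsub (mem_closedBall_self hTa)⟩

theorem ofReal_mul_tsum_le_measure_univ [PerfectSpace X] {φ : ℝ → ℝ} (hφ : MonotoneOn φ (Ioi 0))
    {c : ℝ} (hc : 0 ≤ c) {u : Set X} (hu : u.Countable) {T : X → ℝ}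
    (hT : ∀ b ∈ u, 0 < T b ∧ ENNReal.ofReal (c * φ (8 * T b)) ≤ ν (closedBall b (T b)))
    (hdisj : u.PairwiseDisjoint fun b => closedBall b (T b)) :
    ENNReal.ofReal c * ∑' b : u, ENNReal.ofReal (φ (ediam (closedBall (b : X) (4 * T b))).toReal)
      ≤ ν univ := by
  have := hu.to_subtype
  rw [← ENNReal.tsum_mul_left]
  calc ∑' b : u, ENNReal.ofReal c * ENNReal.ofReal (φ (ediam (closedBall (b : X) (4 * T b))).toReal)
      ≤ ∑' b : u, ν (closedBall (b : X) (T b)) := by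
        refine ENNReal.tsum_le_tsum fun b => ?_
        obtain ⟨hTb, hνb⟩ := hT b b.2
        calc _ ≤ ENNReal.ofReal c * ENNReal.ofReal (φ (8 * T b)) :=
              mul_le_mul_right (ofReal_toReal_ediam_closedBall_le hφ _ hTb) _
          _ = ENNReal.ofReal (c * φ (8 * T b)) := (ENNReal.ofReal_mul hc).symm
          _ ≤ _ := hνb
    _ = ν (⋃ b : u, closedBall (b : X) (T b)) :=
        (measure_iUnion (hdisj.subtype _ _) fun _ => measurableSet_closedBall).symm
    _ ≤ ν univ := measure_mono (subset_univ _)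

theorem mkMetric_le_measure_univ_div [PerfectSpace X] [IsFiniteMeasure ν] {φ : ℝ → ℝ}
    (hφ : MonotoneOn φ (Ioi 0)) {A : Set X} {c : ℝ} (hc : 0 < c)
    (hA : ∀ y ∈ A, ∀ ε > 0, ∃ t ∈ Ioo 0 ε, ENNReal.ofReal (c * φ (8 * t)) < ν (closedBall y t)) :
    Measure.mkMetric (fun t => ENNReal.ofReal (φ t.toReal)) A ≤ ν univ / ENNReal.ofReal c := by
  choose! T hT using hA
  set T' : ℕ → X → ℝ := fun n y => T y (1 / ((n : ℝ) + 1))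
  have hT' (n : ℕ) (y : X) (hy : y ∈ A) : T' n y ∈ Ioo 0 (1 / ((n : ℝ) + 1)) ∧
      ENNReal.ofReal (c * φ (8 * T' n y)) < ν (closedBall y (T' n y)) := hT y hy _ (by positivity)
  have hcover (n : ℕ) := exists_countable_disjoint_closedBall_cover ν A (T' n)
    fun a ha => ⟨(hT' n a ha).1.2.le, pos_of_gt (hT' n a ha).2⟩
  choose u huA hu_count hu_disj hu_cover using hcover
  have := fun n => (hu_count n).to_subtype
  have hdiam (n : ℕ) (b : u n) :
      ediam (closedBall (b : X) (4 * T' n b)) ≤ 2 * ENNReal.ofReal (4 * (1 / ((n : ℝ) + 1))) := by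
    have hb := (hT' n b (huA n b.2)).1
    rw [← closedEBall_ofReal (by linarith [hb.1])]
    exact ediam_closedEBall_le.trans (by gcongr; exact hb.2.le)
  have hlim : Tendsto (fun n : ℕ => 2 * ENNReal.ofReal (4 * (1 / ((n : ℝ) + 1)))) atTop (𝓝 0) := by
    simpa using ENNReal.Tendsto.const_mul (ENNReal.tendsto_ofReal
      ((tendsto_one_div_add_atTop_nhds_zero_nat (𝕜 := ℝ)).const_mul 4))
      (Or.inr ENNReal.ofNat_ne_top)
  refine (Measure.mkMetric_le_liminf_tsum A _ hlim
    (fun n (b : u n) => closedBall (b : X) (4 * T' n b))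
    (Eventually.of_forall hdiam) (Eventually.of_forall hu_cover) _).trans
    (liminf_le_of_frequently_le' (Frequently.of_forall fun n => ?_))
  rw [ENNReal.le_div_iff_mul_le (by simp [hc]) (by simp), mul_comm]
  exact ofReal_mul_tsum_le_measure_univ ν hφ hc.le (hu_count n)
    (fun b hb => ⟨(hT' n b (huA n hb)).1.1, (hT' n b (huA n hb)).2.le⟩) (hu_disj n)

theorem mkMetric_eq_zero_of_forall_lt_measure_closedBall [PerfectSpace X] [IsFiniteMeasure ν]
    {φ : ℝ → ℝ} (hφ : MonotoneOn φ (Ioi 0)) {A : Set X}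
    (hA : ∀ y ∈ A, ∀ c > 0, ∀ ε > 0, ∃ t ∈ Ioo 0 ε,
      ENNReal.ofReal (c * φ (8 * t)) < ν (closedBall y t)) :
    Measure.mkMetric (fun t => ENNReal.ofReal (φ t.toReal)) A = 0 := by
  have hlim : Tendsto (fun n : ℕ => ν univ / ENNReal.ofReal n) atTop (𝓝 0) := by
    simpa using ENNReal.Tendsto.const_div
      (ENNReal.tendsto_ofReal_atTop.comp tendsto_natCast_atTop_atTop)
      (Or.inr (measure_ne_top ν univ))
  refine le_antisymm (ge_of_tendsto hlim ?_) zero_le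
  filter_upwards [eventually_gt_atTop 0] with n hn
  exact mkMetric_le_measure_univ_div ν hφ (by positivity) fun y hy => hA y hy n (by positivity)

end MassDistribution

theorem perfectSpace_sphere {E : Type*} [NormedAddCommGroup E] [NormedSpace ℝ E]
    (hE : 1 < Module.rank ℝ E) (x : E) {r : ℝ} (hr : 0 < r) : PerfectSpace (sphere x r) := by
  have := isConnected_iff_connectedSpace.mp (isConnected_sphere hE x hr.le)
  have : Nontrivial E := rank_pos_iff_nontrivial.mp (zero_lt_one.trans hE)
  obtain ⟨z, hz⟩ := (NormedSpace.sphere_nonempty (x := x)).mpr hr.le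
  have hz' : x + (x - z) ∈ sphere x r := by simpa [dist_eq_norm, norm_sub_rev] using hz
  have : Nontrivial (sphere x r) := ⟨⟨⟨z, hz⟩, ⟨_, hz'⟩, fun h => by
    have h' : (2 : ℝ) • (z - x) = 0 := by
      rw [two_smul]; nth_rewrite 1 [Subtype.mk.inj h]; abel
    simp [sub_eq_zero] at h'
    simp [h', hr.ne] at hz⟩⟩
  infer_instance

theorem exists_pow_two_mul_le_two_mul_max {δ ρ : ℝ} (hδ : 0 < δ) {K : ℕ} (hK : ρ ≤ 2 ^ K * δ) :
    ∃ k ≤ K, ρ ≤ 2 ^ k * δ ∧ 2 ^ k * δ ≤ 2 * max δ ρ := by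
  classical
  have hex : ∃ k, ρ ≤ 2 ^ k * δ := ⟨K, hK⟩
  refine ⟨Nat.find hex, Nat.find_le hK, Nat.find_spec hex, ?_⟩
  rcases Nat.eq_zero_or_pos (Nat.find hex) with h0 | hpos
  · rw [h0, pow_zero, one_mul]
    linarith [le_max_left δ ρ]
  · obtain ⟨j, hj⟩ := Nat.exists_eq_add_of_lt hpos
    have hρ : 2 ^ j * δ < ρ := not_le.mp (Nat.find_min hex (by omega))
    rw [hj, zero_add, pow_succ]
    linarith [le_max_right δ ρ]

section PoissonKernel

variable {d : ℕ}

local notation "𝔼" => EuclideanSpace ℝ (Fin (d + 1))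
local notation "𝕊" => sphere (0 : 𝔼) 1

theorem poissonKernelSphere_nonneg {x : 𝔼} (hx : ‖x‖ ≤ 1) (ξ : 𝔼) : 0 ≤ poissonKernelSphere d x ξ :=
  div_nonneg (by nlinarith [norm_nonneg x]) (by positivity)

theorem norm_smul_coe_sphere (y : 𝕊) {r : ℝ} (hr : 0 ≤ r) : ‖r • (y : 𝔼)‖ = r := by
  rw [norm_smul, norm_eq_of_mem_sphere, Real.norm_of_nonneg hr, mul_one]

theorem max_one_sub_dist_le_two_mul_norm_smul_sub (y ξ : 𝕊) {r : ℝ} (hr0 : 0 ≤ r) (hr1 : r ≤ 1) :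
    max (1 - r) (dist y ξ) ≤ 2 * ‖r • (y : 𝔼) - ξ‖ := by
  have hyr : ‖(y : 𝔼) - r • (y : 𝔼)‖ = 1 - r := by
    rw [← norm_smul_coe_sphere y (sub_nonneg.mpr hr1), sub_smul, one_smul]
  have h1 : 1 - r ≤ ‖r • (y : 𝔼) - ξ‖ := by
    simpa [norm_eq_of_mem_sphere, norm_smul_coe_sphere y hr0, norm_sub_rev] using
      norm_sub_norm_le (ξ : 𝔼) (r • (y : 𝔼))
  have h2 : dist y ξ ≤ (1 - r) + ‖r • (y : 𝔼) - ξ‖ := by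
    rw [Subtype.dist_eq, dist_eq_norm, ← hyr]
    exact norm_sub_le_norm_sub_add_norm_sub _ _ _
  exact max_le (by linarith) (by linarith)

theorem poissonKernelSphere_smul_le (y ξ : 𝕊) {r : ℝ} (hr0 : 0 ≤ r) (hr1 : r < 1) :
    poissonKernelSphere d (r • (y : 𝔼)) ξ ≤
      2 ^ (d + 2) * (1 - r) / max (1 - r) (dist y ξ) ^ (d + 1) := by
  have hmax := max_one_sub_dist_le_two_mul_norm_smul_sub y ξ hr0 hr1.le
  have hpos : 0 < max (1 - r) (dist y ξ) := lt_max_of_lt_left (by linarith)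
  rw [poissonKernelSphere, norm_smul_coe_sphere y hr0]
  calc (1 - r ^ 2) / ‖r • (y : 𝔼) - ξ‖ ^ (d + 1)
      ≤ 2 * (1 - r) / (max (1 - r) (dist y ξ) / 2) ^ (d + 1) := by
        gcongr
        · nlinarith
        · linarith
    _ = 2 ^ (d + 2) * (1 - r) / max (1 - r) (dist y ξ) ^ (d + 1) := by
        rw [div_pow]; field_simp; ring

theorem poissonKernelSphere_smul_le_sum_indicator (y ξ : 𝕊) {r : ℝ} (hr0 : 0 ≤ r) (hr1 : r < 1)
    {K : ℕ} (hK : 2 ≤ 2 ^ K * (1 - r)) :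
    poissonKernelSphere d (r • (y : 𝔼)) ξ ≤ ∑ k ∈ Finset.range (K + 1),
      (closedBall y (2 ^ k * (1 - r))).indicator
        (fun _ => 2 ^ (2 * d + 3) * (1 / 2) ^ k / (2 ^ k * (1 - r)) ^ d) ξ := by
  have hδ : 0 < 1 - r := by linarith
  have hdist : dist y ξ ≤ 2 := by
    have := dist_le_norm_add_norm (y : 𝔼) ξ
    rw [norm_eq_of_mem_sphere, norm_eq_of_mem_sphere] at this
    rw [Subtype.dist_eq]
    linarith
  obtain ⟨k, hkK, hρ, hk2⟩ := exists_pow_two_mul_le_two_mul_max hδ (hdist.trans hK)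
  calc poissonKernelSphere d (r • (y : 𝔼)) ξ
      ≤ 2 ^ (d + 2) * (1 - r) / max (1 - r) (dist y ξ) ^ (d + 1) :=
        poissonKernelSphere_smul_le y ξ hr0 hr1
    _ ≤ 2 ^ (d + 2) * (1 - r) / (2 ^ k * (1 - r) / 2) ^ (d + 1) := by
        gcongr; linarith
    _ = (closedBall y (2 ^ k * (1 - r))).indicator
          (fun _ => 2 ^ (2 * d + 3) * (1 / 2) ^ k / (2 ^ k * (1 - r)) ^ d) ξ := by
        rw [indicator_of_mem (by rwa [mem_closedBall, dist_comm])]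
        rw [div_pow, pow_succ (2 ^ k * (1 - r)), one_div_pow]
        field_simp
        ring
    _ ≤ _ := Finset.single_le_sum (f := fun k => (closedBall y (2 ^ k * (1 - r))).indicator
          (fun _ => 2 ^ (2 * d + 3) * (1 / 2) ^ k / (2 ^ k * (1 - r)) ^ d) ξ)
        (fun k _ => indicator_nonneg (fun _ _ => by positivity) _)
        (Finset.mem_range.mpr (Nat.lt_succ_of_le hkK))

theorem norm_integral_poissonKernelSphere_mul_le (ν : Measure 𝕊) {g : 𝕊 → ℂ} (hg : ∀ ξ, ‖g ξ‖ = 1)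
    {x : 𝔼} (hx : ‖x‖ ≤ 1) :
    ‖∫ ξ, (poissonKernelSphere d x ξ : ℂ) * g ξ ∂ν‖ ≤ ∫ ξ, poissonKernelSphere d x ξ ∂ν := by
  refine (norm_integral_le_integral_norm _).trans_eq
    (integral_congr_ae (Eventually.of_forall fun ξ => ?_))
  simp only [norm_mul, hg, mul_one, Complex.norm_real, Real.norm_of_nonneg
    (poissonKernelSphere_nonneg hx (ξ : 𝔼))]

theorem exists_integral_poissonKernelSphere_le (ν : Measure 𝕊) [IsFiniteMeasure ν] (y : 𝕊) {r : ℝ}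
    (hr0 : 0 ≤ r) (hr1 : r < 1) :
    ∃ t, 1 - r ≤ t ∧ ∫ ξ, poissonKernelSphere d (r • (y : 𝔼)) ξ ∂ν ≤
      2 ^ (2 * d + 4) * (ν.real (closedBall y t) / t ^ d) := by
  have hδ : 0 < 1 - r := by linarith
  obtain ⟨K, hK⟩ : ∃ K : ℕ, 2 ≤ 2 ^ K * (1 - r) := by
    obtain ⟨K, hK⟩ := pow_unbounded_of_one_lt (2 / (1 - r)) one_lt_two
    exact ⟨K, by rw [div_lt_iff₀ hδ] at hK; linarith⟩
  set a : ℕ → ℝ := fun k => ν.real (closedBall y (2 ^ k * (1 - r))) / (2 ^ k * (1 - r)) ^ d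
  obtain ⟨k₀, -, hk₀⟩ := Finset.exists_max_image (Finset.range (K + 1)) a ⟨0, by simp⟩
  refine ⟨2 ^ k₀ * (1 - r), le_mul_of_one_le_left hδ.le (one_le_pow₀ one_le_two), ?_⟩
  have hry : ‖r • (y : 𝔼)‖ ≤ 1 := (norm_smul_coe_sphere y hr0).trans_le hr1.le
  have hint (k : ℕ) : Integrable ((closedBall y (2 ^ k * (1 - r))).indicator
      (fun _ => (2 : ℝ) ^ (2 * d + 3) * (1 / 2) ^ k / (2 ^ k * (1 - r)) ^ d)) ν :=
    (integrable_const _).indicator measurableSet_closedBall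
  calc ∫ ξ, poissonKernelSphere d (r • (y : 𝔼)) ξ ∂ν
      ≤ ∫ ξ, ∑ k ∈ Finset.range (K + 1), (closedBall y (2 ^ k * (1 - r))).indicator
          (fun _ => 2 ^ (2 * d + 3) * (1 / 2) ^ k / (2 ^ k * (1 - r)) ^ d) ξ ∂ν :=
        integral_mono_of_nonneg (Eventually.of_forall fun ξ => poissonKernelSphere_nonneg hry ξ)
          (integrable_finsetSum _ fun k _ => hint k)
          (Eventually.of_forall fun ξ => poissonKernelSphere_smul_le_sum_indicator y ξ hr0 hr1 hK)
    _ = 2 ^ (2 * d + 3) * ∑ k ∈ Finset.range (K + 1), (1 / 2) ^ k * a k := by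
        rw [integral_finsetSum _ fun k _ => hint k, Finset.mul_sum]
        refine Finset.sum_congr rfl fun k _ => ?_
        rw [integral_indicator_const _ measurableSet_closedBall, smul_eq_mul]
        ring
    _ ≤ 2 ^ (2 * d + 3) * ((∑ k ∈ Finset.range (K + 1), (1 / 2 : ℝ) ^ k) * a k₀) := by
        rw [Finset.sum_mul]
        gcongr with k hk
        exact hk₀ k hk
    _ ≤ 2 ^ (2 * d + 3) * (2 * a k₀) := by
        gcongr
        exact sum_geometric_two_le _
    _ = 2 ^ (2 * d + 4) * a k₀ := by ring

variable (ν : Measure (sphere (0 : EuclideanSpace ℝ (Fin (d + 1))) 1)) [IsFiniteMeasure ν]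
  {g : sphere (0 : EuclideanSpace ℝ (Fin (d + 1))) 1 → ℂ} {τ : ℝ → ℝ}
  {y : sphere (0 : EuclideanSpace ℝ (Fin (d + 1))) 1}

theorem exists_lt_measureReal_closedBall (hg : ∀ ξ, ‖g ξ‖ = 1)
    (hy : ∀ M : ℝ, ∃ᶠ r in 𝓝[<] (1 : ℝ),
      M < ‖∫ ξ, (poissonKernelSphere d (r • (y : 𝔼)) ξ : ℂ) * g ξ ∂ν‖ / τ (1 - r))
    {η : ℝ} (hη : 0 < η) (hτ : ∀ s ∈ Ioo 0 η, 0 < τ s) (L : ℝ) :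
    ∃ δ ∈ Ioo 0 η, ∃ t, δ ≤ t ∧ L * τ δ * t ^ d < ν.real (closedBall y t) := by
  have hnear : ∀ᶠ r in 𝓝[<] (1 : ℝ), r ∈ Ioo (max 0 (1 - η)) 1 :=
    Ioo_mem_nhdsLT (max_lt zero_lt_one (by linarith))
  obtain ⟨r, hM, hr⟩ := ((hy (2 ^ (2 * d + 4) * L)).and_eventually hnear).exists
  have hr0 : 0 ≤ r := (le_max_left _ _).trans hr.1.le
  have hδ : 1 - r ∈ Ioo 0 η := ⟨by linarith [hr.2], by linarith [le_max_right 0 (1 - η), hr.1]⟩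
  obtain ⟨t, hδt, ht⟩ := exists_integral_poissonKernelSphere_le ν y hr0 hr.2
  refine ⟨1 - r, hδ, t, hδt, ?_⟩
  have htpos : 0 < t := hδ.1.trans_le hδt
  rw [lt_div_iff₀ (hτ _ hδ)] at hM
  have := hM.trans_le ((norm_integral_poissonKernelSphere_mul_le ν hg
    ((norm_smul_coe_sphere y hr0).trans_le hr.2.le)).trans ht)
  rwa [mul_assoc, mul_lt_mul_iff_right₀ (by positivity), lt_div_iff₀ (by positivity)] at this

theorem not_forall_frequently_lt_of_eq_zero (hd : d = 0) (hg : ∀ ξ, ‖g ξ‖ = 1) {η : ℝ} (hη : 0 < η)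
    (hτ : ∀ s ∈ Ioo 0 η, 1 ≤ τ s) :
    ¬ ∀ M : ℝ, ∃ᶠ r in 𝓝[<] (1 : ℝ),
      M < ‖∫ ξ, (poissonKernelSphere d (r • (y : 𝔼)) ξ : ℂ) * g ξ ∂ν‖ / τ (1 - r) := fun hy => by
  obtain ⟨δ, hδ, t, -, hlt⟩ := exists_lt_measureReal_closedBall ν hg hy hη
    (fun s hs => one_pos.trans_le (hτ s hs)) (ν.real univ)
  rw [show t ^ d = 1 by rw [hd, pow_zero], mul_one] at hlt
  have hνB : ν.real (closedBall y t) ≤ ν.real univ := measureReal_mono (subset_univ _)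
  nlinarith [hτ δ hδ, measureReal_nonneg (μ := ν) (s := univ)]

theorem exists_ofReal_lt_measure_closedBall (hg : ∀ ξ, ‖g ξ‖ = 1)
    (hy : ∀ M : ℝ, ∃ᶠ r in 𝓝[<] (1 : ℝ),
      M < ‖∫ ξ, (poissonKernelSphere d (r • (y : 𝔼)) ξ : ℂ) * g ξ ∂ν‖ / τ (1 - r))
    (hτanti : AntitoneOn τ (Ioo 0 1)) {φ : ℝ → ℝ} {a C : ℝ} (ha : 0 < a) (ha1 : a ≤ 1) (hC : 0 < C)
    (hτ : ∀ s ∈ Ioo 0 a, 1 ≤ τ s) (hφ : ∀ s ∈ Ioo 0 a, φ s ≤ C * (τ s * s ^ d))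
    {c : ℝ} (hc : 0 < c) {ε : ℝ} (hε : 0 < ε) :
    ∃ t ∈ Ioo 0 ε, ENNReal.ofReal (c * φ (8 * t)) < ν (closedBall y t) := by
  set ε' := min ε (a / 8)
  have hε' : 0 < ε' := lt_min hε (by positivity)
  have hε'a : ε' ≤ a / 8 := min_le_right _ _
  set L := ν.real univ / ε' ^ d + c * C * 8 ^ d
  have hL₁ : ν.real univ / ε' ^ d ≤ L := le_add_of_nonneg_right (by positivity)
  have hL₂ : c * C * 8 ^ d ≤ L := le_add_of_nonneg_left (by positivity)
  obtain ⟨δ, hδ, t, hδt, hlt⟩ := exists_lt_measureReal_closedBall ν hg hy hε'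
    (fun s hs => one_pos.trans_le (hτ s ⟨hs.1, by linarith [hs.2]⟩)) L
  have hτδ : 1 ≤ τ δ := hτ δ ⟨hδ.1, by linarith [hδ.2]⟩
  have htpos : 0 < t := hδ.1.trans_le hδt
  have hνB : ν.real (closedBall y t) ≤ ν.real univ := measureReal_mono (subset_univ _)
  have ht : t < ε' := by
    by_contra! h
    have : ν.real univ ≤ L * τ δ * t ^ d := calc
      ν.real univ = ν.real univ / ε' ^ d * 1 * ε' ^ d := by field_simp
      _ ≤ L * τ δ * t ^ d := by gcongr
    linarith
  have h8t : 8 * t ∈ Ioo 0 a := ⟨by positivity, by linarith⟩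
  have hτ8t : τ (8 * t) ≤ τ δ :=
    hτanti ⟨hδ.1, by linarith [hδ.2]⟩ ⟨h8t.1, h8t.2.trans_le ha1⟩ (by linarith)
  have hlt' : c * φ (8 * t) < ν.real (closedBall y t) := calc
    c * φ (8 * t) ≤ c * (C * (τ (8 * t) * (8 * t) ^ d)) := by gcongr; exact hφ _ h8t
    _ = c * C * 8 ^ d * τ (8 * t) * t ^ d := by ring
    _ ≤ L * τ δ * t ^ d := by gcongr; exact zero_le_one.trans (hτ _ h8t)
    _ < _ := hlt
  refine ⟨t, ⟨htpos, ht.trans_le (min_le_left _ _)⟩, ?_⟩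
  rw [← ofReal_measureReal, ENNReal.ofReal_lt_ofReal_iff']
  exact ⟨hlt', lt_of_le_of_lt (by positivity) hlt⟩

end PoissonKernel

/-- The finite complex measure `μ` is encoded through its polar decomposition `dμ = g d|μ|`,
with `ν = |μ|` and `|g| = 1`. -/
theorem hausdorff_gauge_measure_exceptional_eq_zero_general (d : ℕ)
    (ν : Measure (sphere (0 : EuclideanSpace ℝ (Fin (d + 1))) 1)) [IsFiniteMeasure ν]
    (g : sphere (0 : EuclideanSpace ℝ (Fin (d + 1))) 1 → ℂ)
    (hg : ∀ ξ, ‖g ξ‖ = 1)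
    (τ : ℝ → ℝ)
    (hτanti : AntitoneOn τ (Ioo (0 : ℝ) 1))
    (hτtop : Tendsto τ (nhdsWithin 0 (Ioi 0)) atTop)
    (φ : ℝ → ℝ)
    (hφmono : MonotoneOn φ (Ioi 0))
    (hO : φ =O[nhdsWithin 0 (Ioi 0)] fun s => τ s * s ^ d) :
    Measure.mkMetric (fun t => ENNReal.ofReal (φ t.toReal))
      {y : sphere (0 : EuclideanSpace ℝ (Fin (d + 1))) 1 |
        ∀ M : ℝ, ∃ᶠ r in nhdsWithin (1 : ℝ) (Iio 1),
          M < ‖∫ ξ, (poissonKernelSphere d (r • (y : EuclideanSpace ℝ (Fin (d + 1)))) ξ : ℂ) * g ξ ∂ν‖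
                / τ (1 - r)} = 0 := by
  obtain ⟨C, hC, hφτ⟩ := hO.exists_pos
  obtain ⟨a, ha, ha1, hnear⟩ : ∃ a, 0 < a ∧ a ≤ 1 ∧
      ∀ s ∈ Ioo 0 a, 1 ≤ τ s ∧ φ s ≤ C * (τ s * s ^ d) := by
    obtain ⟨a, ha, hsub⟩ :=
      mem_nhdsGT_iff_exists_Ioo_subset.mp ((hτtop.eventually_ge_atTop 1).and hφτ.bound)
    refine ⟨min a 1, lt_min ha one_pos, min_le_right _ _, fun s hs => ?_⟩
    obtain ⟨hτs, hφs⟩ := hsub ⟨hs.1, hs.2.trans_le (min_le_left _ _)⟩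
    have hs0 : 0 ≤ τ s * s ^ d := mul_nonneg (zero_le_one.trans hτs) (pow_nonneg hs.1.le d)
    exact ⟨hτs, (le_abs_self _).trans (hφs.trans_eq (by rw [Real.norm_of_nonneg hs0]))⟩
  rcases Nat.eq_zero_or_pos d with hd | hd
  · refine measure_mono_null (fun y hy => ?_) measure_empty
    exact (not_forall_frequently_lt_of_eq_zero ν hd hg ha (fun s hs => (hnear s hs).1) hy).elim
  · have : PerfectSpace (sphere (0 : EuclideanSpace ℝ (Fin (d + 1))) 1) := perfectSpace_sphere
      (by rw [← Module.finrank_eq_rank, finrank_euclideanSpace_fin]; exact_mod_cast (by omega)) 0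
      one_pos
    exact mkMetric_eq_zero_of_forall_lt_measure_closedBall ν hφmono fun y hy c hc ε hε =>
      exists_ofReal_lt_measure_closedBall ν hg hy hτanti ha ha1 hC (fun s hs => (hnear s hs).1)
        (fun s hs => (hnear s hs).2) hc hε

/-- A finite complex Borel measure `μ` on the sphere is encoded through its polar
decomposition `dμ = g d|μ|`, where `ν = |μ|` is a finite positive measure and `g` is
a measurable function of modulus `1`.  If `τ` is nonincreasing with `τ(0⁺) = ∞` and
`φ` is a dimension function with `φ(s) = O(τ(s) s^d)` as `s → 0⁺`, then the set
of points `y` where `limsup_{r→1} |P[μ](ry)|/τ(1-r) = ∞` is `H^φ`-null. -/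
theorem hausdorff_gauge_measure_exceptional_eq_zero (d : ℕ)
    (ν : Measure (sphere (0 : EuclideanSpace ℝ (Fin (d + 1))) 1)) [IsFiniteMeasure ν]
    (g : sphere (0 : EuclideanSpace ℝ (Fin (d + 1))) 1 → ℂ)
    (hgm : Measurable g) (hg : ∀ ξ, ‖g ξ‖ = 1)
    (τ : ℝ → ℝ) (hτpos : ∀ x ∈ Ioo (0 : ℝ) 1, 0 < τ x)
    (hτanti : AntitoneOn τ (Ioo (0 : ℝ) 1))
    (hτtop : Tendsto τ (nhdsWithin 0 (Ioi 0)) atTop)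
    (φ : ℝ → ℝ) (hφpos : ∀ s > (0 : ℝ), 0 < φ s)
    (hφmono : MonotoneOn φ (Ioi 0)) (hφcont : ContinuousOn φ (Ioi 0))
    (hφzero : Tendsto φ (nhdsWithin 0 (Ioi 0)) (nhds 0))
    (hO : φ =O[nhdsWithin 0 (Ioi 0)] fun s => τ s * s ^ d) :
    Measure.mkMetric (fun t => ENNReal.ofReal (φ t.toReal))
      {y : sphere (0 : EuclideanSpace ℝ (Fin (d + 1))) 1 |
        ∀ M : ℝ, ∃ᶠ r in nhdsWithin (1 : ℝ) (Iio 1),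
          M < ‖∫ ξ, (poissonKernelSphere d (r • (y : EuclideanSpace ℝ (Fin (d + 1)))) ξ : ℂ) * g ξ ∂ν‖
                / τ (1 - r)} = 0 :=
  hausdorff_gauge_measure_exceptional_eq_zero_general d ν g hg τ hτanti hτtop φ hφmono hO
end

section
/- For every β ∈ [0,d] and every f ∈ L¹(S^d), the set E(β,f) = {y ∈ S^d : limsup_{r→1} |P[f](ry)|·(1-r)^β = +∞} has Hausdorff dimension at most d - β. -/
/-!
Put `ν = |f| σ` and `s = d - β`. Since `P(ry, ξ) ≤ 2^(d+2) (1 - r) / max(1 - r, |ξ - y|)^(d+1)`,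
a bound `ν(B(y, ρ)) ≤ C ρ^s` for all `ρ > 0` gives, summing over dyadic balls around `y`,
`|P[f](ry)| ≤ 4^(d+2) C (1 - r)^(-β)`; as `ν` is finite, such a bound holds as soon as
`ν(B(y, ρ)) ≤ ρ^s` for all small `ρ`. Hence at each point of `E(β, f)` there are arbitrarily small
balls with `ν(B(y, δ)) > δ^s`, and covering `E(β, f)` by the fourfold enlargements of a disjoint
Vitali subfamily of them bounds its `s`-dimensional Hausdorff measure by `8^s ν(S^d) < ∞`.
-/

open Metric Set MeasureTheory Filter

open scoped ENNReal Topology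

lemma Metric.ediam_closedBall_le_ofReal {X : Type*} [PseudoMetricSpace X] (x : X) (ρ : ℝ) :
    ediam (closedBall x ρ) ≤ ENNReal.ofReal (2 * ρ) :=
  ediam_le_of_forall_dist_le fun a ha b hb => by
    linarith [dist_triangle_right a b x, mem_closedBall.1 ha, mem_closedBall.1 hb]

section DensityCovering

variable {X : Type*} [MetricSpace X] [MeasurableSpace X] [BorelSpace X]
  (ν : Measure X) {s : ℝ} {D : Set X}

lemma exists_countable_disjoint_closedBall_cover_of_frequently_measure_gt [SFinite ν]
    (hD : ∀ y ∈ D, ∃ᶠ δ in 𝓝[>] 0, ENNReal.ofReal (δ ^ s) < ν (closedBall y δ))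
    {ε : ℝ} (hε : 0 < ε) :
    ∃ u : Set (X × ℝ), u.Countable ∧ u.PairwiseDisjoint (fun p => closedBall p.1 p.2) ∧
      (∀ p ∈ u, 0 < p.2 ∧ p.2 < ε ∧ ENNReal.ofReal (p.2 ^ s) < ν (closedBall p.1 p.2)) ∧
      D ⊆ ⋃ p ∈ u, closedBall p.1 (4 * p.2) := by
  set t : Set (X × ℝ) :=
    {p | 0 < p.2 ∧ p.2 < ε ∧ ENNReal.ofReal (p.2 ^ s) < ν (closedBall p.1 p.2)}
  obtain ⟨u, hut, hdisj, hcov⟩ :=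
    Vitali.exists_disjoint_subfamily_covering_enlargement_closedBall t Prod.fst Prod.snd ε
      (fun p hp => hp.2.1.le) 4 (by norm_num)
  refine ⟨u, ?_, hdisj, fun p hp => hut hp, fun y hy => ?_⟩
  · have hpos := Measure.countable_meas_pos_of_disjoint_iUnion (μ := ν)
      (fun p : u => measurableSet_closedBall) (hdisj.subtype _ _)
    -- every ball of the subfamily has positive mass, so there are countably many of them
    exact countable_coe_iff.mp <| countable_univ_iff.mp <|
      hpos.mono fun p _ => zero_le.trans_lt (hut p.2).2.2
  · obtain ⟨δ, hδ, hδε⟩ := ((hD y hy).and_eventually (Ioo_mem_nhdsGT hε)).exists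
    obtain ⟨p, hp, hsub⟩ := hcov (y, δ) ⟨hδε.1, hδε.2, hδ⟩
    exact mem_biUnion hp (hsub (mem_closedBall_self hδε.1.le))

lemma hausdorffMeasure_le_of_frequently_measure_closedBall_gt [SFinite ν] (hs : 0 ≤ s)
    (hD : ∀ y ∈ D, ∃ᶠ δ in 𝓝[>] 0, ENNReal.ofReal (δ ^ s) < ν (closedBall y δ)) :
    μH[s] D ≤ ENNReal.ofReal (8 ^ s) * ν univ := by
  choose u hu_count hu_disj hu_mem hu_cover using fun n : ℕ =>
    exists_countable_disjoint_closedBall_cover_of_frequently_measure_gt ν hD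
      (Nat.one_div_pos_of_nat (n := n))
  have := fun n => (hu_count n).to_subtype
  have hdiam (n : ℕ) (p : u n) :
      ediam (closedBall p.1.1 (4 * p.1.2)) ≤ ENNReal.ofReal (8 * (1 / (n + 1))) :=
    (ediam_closedBall_le_ofReal _ _).trans <|
      ENNReal.ofReal_le_ofReal (by linarith [(hu_mem n p p.2).2.1])
  have hlim : Tendsto (fun n : ℕ => ENNReal.ofReal (8 * (1 / (n + 1)))) atTop (𝓝 0) := by
    simpa using ENNReal.tendsto_ofReal
      ((tendsto_one_div_add_atTop_nhds_zero_nat (𝕜 := ℝ)).const_mul 8)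
  refine (Measure.hausdorffMeasure_le_liminf_tsum s D _ hlim _ (.of_forall hdiam)
    (.of_forall fun n => (hu_cover n).trans_eq (biUnion_eq_iUnion _ _))).trans <|
    liminf_le_of_frequently_le' (.of_forall fun n => ?_)
  calc ∑' p : u n, ediam (closedBall p.1.1 (4 * p.1.2)) ^ s
      ≤ ∑' p : u n, ENNReal.ofReal (8 ^ s) * ν (closedBall p.1.1 p.1.2) := by
        refine ENNReal.tsum_le_tsum fun p => ?_
        obtain ⟨hp₀, -, hp⟩ := hu_mem n p p.2
        calc ediam (closedBall p.1.1 (4 * p.1.2)) ^ s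
            ≤ ENNReal.ofReal (2 * (4 * p.1.2)) ^ s :=
              ENNReal.rpow_le_rpow (ediam_closedBall_le_ofReal _ _) hs
          _ = ENNReal.ofReal (8 ^ s) * ENNReal.ofReal (p.1.2 ^ s) := by
              rw [ENNReal.ofReal_rpow_of_pos (by positivity), ← ENNReal.ofReal_mul (by positivity),
                ← Real.mul_rpow (by norm_num) hp₀.le]
              ring_nf
          _ ≤ ENNReal.ofReal (8 ^ s) * ν (closedBall p.1.1 p.1.2) := by gcongr
    _ = ENNReal.ofReal (8 ^ s) * ν (⋃ p : u n, closedBall p.1.1 p.1.2) := by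
        rw [ENNReal.tsum_mul_left, measure_iUnion ((hu_disj n).subtype _ _)
          fun _ => measurableSet_closedBall]
    _ ≤ ENNReal.ofReal (8 ^ s) * ν univ := by gcongr; exact subset_univ _

lemma dimH_le_of_frequently_measure_closedBall_gt [IsFiniteMeasure ν] (hs : 0 ≤ s)
    (hD : ∀ y ∈ D, ∃ᶠ δ in 𝓝[>] 0, ENNReal.ofReal (δ ^ s) < ν (closedBall y δ)) :
    dimH D ≤ ENNReal.ofReal s :=
  dimH_le_of_hausdorffMeasure_ne_top <| by
    rw [Real.coe_toNNReal s hs]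
    exact ne_top_of_le_ne_top (by finiteness)
      (hausdorffMeasure_le_of_frequently_measure_closedBall_gt ν hs hD)

end DensityCovering

lemma exists_two_pow_mul_mem_Icc {δ t : ℝ} (hδ : 0 < δ) :
    ∃ k : ℕ, 2 ^ k * δ ∈ Icc t (2 * max δ t) := by
  rcases le_or_gt t δ with htδ | hδt
  · exact ⟨0, by simpa using htδ, by simp; linarith [le_max_left δ t]⟩
  · obtain ⟨k, hk, hk'⟩ := exists_nat_pow_near ((one_le_div hδ).2 hδt.le) one_lt_two
    rw [le_div_iff₀ hδ] at hk
    rw [div_lt_iff₀ hδ] at hk'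
    exact ⟨k + 1, hk'.le, by rw [pow_succ]; linarith [le_max_right δ t]⟩

section FrostmanBound

variable {X : Type*} [PseudoMetricSpace X] [MeasurableSpace X] (ν : Measure X) {s : ℝ} {y : X}

lemma exists_measure_closedBall_le_mul_rpow [IsFiniteMeasure ν] (hs : 0 ≤ s)
    (h : ∀ᶠ δ in 𝓝[>] 0, ν (closedBall y δ) ≤ ENNReal.ofReal (δ ^ s)) :
    ∃ C < ∞, ∀ δ, 0 < δ → ν (closedBall y δ) ≤ C * ENNReal.ofReal (δ ^ s) := by
  obtain ⟨ε, hε, hεh⟩ := (nhdsGT_basis (0 : ℝ)).eventually_iff.mp h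
  have hεs : ENNReal.ofReal (ε ^ s) ≠ 0 := by simp [Real.rpow_pos_of_pos hε]
  refine ⟨max 1 (ν univ / ENNReal.ofReal (ε ^ s)),
    max_lt ENNReal.one_lt_top (ENNReal.div_lt_top (by finiteness) hεs), fun δ hδ => ?_⟩
  rcases lt_or_ge δ ε with hδε | hεδ
  · exact (hεh ⟨hδ, hδε⟩).trans (le_mul_of_one_le_left zero_le (le_max_left _ _))
  · calc ν (closedBall y δ) ≤ ν univ / ENNReal.ofReal (ε ^ s) * ENNReal.ofReal (ε ^ s) :=
          (measure_mono (subset_univ _)).trans_eq (ENNReal.div_mul_cancel hεs (by simp)).symm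
      _ ≤ max 1 (ν univ / ENNReal.ofReal (ε ^ s)) * ENNReal.ofReal (δ ^ s) := by
          gcongr
          exact le_max_right _ _

omit [MeasurableSpace X] in
lemma ofReal_inv_max_dist_pow_le_tsum_indicator (ξ : X) (n : ℕ) {δ : ℝ} (hδ : 0 < δ) :
    ENNReal.ofReal ((max δ (dist ξ y) ^ n)⁻¹) ≤ ∑' k : ℕ, (closedBall y (2 ^ k * δ)).indicator
      (fun _ => ENNReal.ofReal (2 ^ n * ((2 ^ k * δ) ^ n)⁻¹)) ξ := by
  obtain ⟨k, hk, hk'⟩ := exists_two_pow_mul_mem_Icc (t := dist ξ y) hδ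
  refine le_trans ?_ (ENNReal.le_tsum k)
  rw [indicator_of_mem (mem_closedBall.2 hk)]
  refine ENNReal.ofReal_le_ofReal ?_
  rw [← div_eq_mul_inv, le_div_iff₀ (by positivity), ← div_eq_inv_mul,
    div_le_iff₀ (by positivity), ← mul_pow]
  exact pow_le_pow_left₀ (by positivity) hk' n

variable [OpensMeasurableSpace X]

-- The balls `closedBall y (2 ^ k * δ)` contribute a geometric series of ratio `2 ^ (s - n) ≤ 1/2`.
lemma lintegral_inv_max_dist_pow_le {n : ℕ} (hsn : s + 1 ≤ n) {C : ℝ≥0∞} {δ : ℝ} (hδ : 0 < δ)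
    (hC : ∀ ρ, 0 < ρ → ν (closedBall y ρ) ≤ C * ENNReal.ofReal (ρ ^ s)) :
    ∫⁻ ξ, ENNReal.ofReal ((max δ (dist ξ y) ^ n)⁻¹) ∂ν
      ≤ C * ENNReal.ofReal (2 ^ (n + 1) * δ ^ (s - n)) := by
  have hterm (k : ℕ) : ENNReal.ofReal (2 ^ n * ((2 ^ k * δ) ^ n)⁻¹) * ν (closedBall y (2 ^ k * δ))
      ≤ C * ENNReal.ofReal (2 ^ n * δ ^ (s - n)) * 2⁻¹ ^ k := by
    have hρ : 0 < 2 ^ k * δ := by positivity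
    have hdecay : (2 ^ k * δ) ^ (s - n) ≤ δ ^ (s - n) * 2⁻¹ ^ k := by
      rw [Real.mul_rpow (by positivity) hδ.le, mul_comm, inv_pow, ← Real.rpow_natCast 2 k,
        ← Real.rpow_neg zero_le_two, ← Real.rpow_mul zero_le_two]
      gcongr
      · exact one_le_two
      · nlinarith [(Nat.cast_nonneg k : (0 : ℝ) ≤ k)]
    calc ENNReal.ofReal (2 ^ n * ((2 ^ k * δ) ^ n)⁻¹) * ν (closedBall y (2 ^ k * δ))
        ≤ ENNReal.ofReal (2 ^ n * ((2 ^ k * δ) ^ n)⁻¹) *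
            (C * ENNReal.ofReal ((2 ^ k * δ) ^ s)) := by
          gcongr; exact hC _ hρ
      _ = C * ENNReal.ofReal (2 ^ n * (2 ^ k * δ) ^ (s - n)) := by
          rw [mul_left_comm, ← ENNReal.ofReal_mul (by positivity), mul_assoc,
            Real.rpow_sub hρ, Real.rpow_natCast, inv_mul_eq_div]
      _ ≤ C * ENNReal.ofReal (2 ^ n * (δ ^ (s - n) * 2⁻¹ ^ k)) := by gcongr
      _ = C * ENNReal.ofReal (2 ^ n * δ ^ (s - n)) * 2⁻¹ ^ k := by
          rw [← mul_assoc, ENNReal.ofReal_mul' (by positivity), ENNReal.ofReal_pow (by norm_num),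
            ENNReal.ofReal_inv_of_pos two_pos, ENNReal.ofReal_ofNat, mul_assoc]
  calc ∫⁻ ξ, ENNReal.ofReal ((max δ (dist ξ y) ^ n)⁻¹) ∂ν
      ≤ ∑' k, ENNReal.ofReal (2 ^ n * ((2 ^ k * δ) ^ n)⁻¹) * ν (closedBall y (2 ^ k * δ)) := by
        refine (lintegral_mono fun ξ =>
          ofReal_inv_max_dist_pow_le_tsum_indicator ξ n hδ).trans_eq ?_
        rw [lintegral_tsum fun k =>
          (measurable_const.indicator measurableSet_closedBall).aemeasurable]
        simp only [lintegral_indicator_const measurableSet_closedBall]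
    _ ≤ ∑' k : ℕ, C * ENNReal.ofReal (2 ^ n * δ ^ (s - n)) * 2⁻¹ ^ k := ENNReal.tsum_le_tsum hterm
    _ = C * ENNReal.ofReal (2 ^ (n + 1) * δ ^ (s - n)) := by
        rw [ENNReal.tsum_mul_left, ENNReal.tsum_geometric, ENNReal.one_sub_inv_two, inv_inv,
          mul_assoc, ← ENNReal.ofReal_ofNat 2, ← ENNReal.ofReal_mul (by positivity), pow_succ]
        ring_nf

end FrostmanBound

lemma max_one_sub_dist_le_two_mul_norm_smul_sub_s8 {E : Type*} [NormedAddCommGroup E]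
    [NormedSpace ℝ E] {y ξ : E} (hy : ‖y‖ = 1) (hξ : ‖ξ‖ = 1) {r : ℝ} (hr₀ : 0 ≤ r)
    (hr₁ : r ≤ 1) :
    max (1 - r) (dist ξ y) ≤ 2 * ‖r • y - ξ‖ := by
  have hry : ‖r • y‖ = r := by rw [norm_smul, hy, mul_one, Real.norm_of_nonneg hr₀]
  have hry' : ‖y - r • y‖ = 1 - r := by
    rw [show y - r • y = (1 - r) • y by rw [sub_smul, one_smul], norm_smul, hy, mul_one,
      Real.norm_of_nonneg (sub_nonneg.2 hr₁)]
  have h₁ : 1 - r ≤ ‖r • y - ξ‖ := by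
    simpa [hξ, hry, norm_sub_rev] using norm_sub_norm_le ξ (r • y)
  have h₂ : dist ξ y ≤ (1 - r) + ‖r • y - ξ‖ := by
    rw [dist_comm, dist_eq_norm, ← hry']
    exact norm_sub_le_norm_sub_add_norm_sub _ _ _
  exact max_le (by linarith) (by linarith)

lemma poissonKernelBall_nonneg {d : ℕ} {x : EuclideanSpace ℝ (Fin (d + 1))} (hx : ‖x‖ ≤ 1)
    (ξ : EuclideanSpace ℝ (Fin (d + 1))) : 0 ≤ poissonKernelBall d x ξ :=
  div_nonneg (sub_nonneg.2 (pow_le_one₀ (norm_nonneg x) hx)) (by positivity)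

lemma poissonKernelBall_smul_le {d : ℕ} {y ξ : EuclideanSpace ℝ (Fin (d + 1))} (hy : ‖y‖ = 1)
    (hξ : ‖ξ‖ = 1) {r : ℝ} (hr₀ : 0 ≤ r) (hr₁ : r < 1) :
    poissonKernelBall d (r • y) ξ
      ≤ 2 ^ (d + 2) * (1 - r) * (max (1 - r) (dist ξ y) ^ (d + 1))⁻¹ := by
  have hmax := max_one_sub_dist_le_two_mul_norm_smul_sub_s8 hy hξ hr₀ hr₁.le
  have hpos : 0 < max (1 - r) (dist ξ y) := lt_max_of_lt_left (sub_pos.2 hr₁)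
  rw [poissonKernelBall, norm_smul, hy, mul_one, Real.norm_of_nonneg hr₀]
  calc (1 - r ^ 2) / ‖r • y - ξ‖ ^ (d + 1)
      ≤ 2 * (1 - r) / (max (1 - r) (dist ξ y) / 2) ^ (d + 1) := by
        gcongr
        · nlinarith
        · linarith
    _ = 2 ^ (d + 2) * (1 - r) * (max (1 - r) (dist ξ y) ^ (d + 1))⁻¹ := by
        rw [div_pow, div_div_eq_mul_div, pow_succ 2 (d + 1)]
        field_simp

lemma enorm_integral_mul_le_lintegral_withDensity {α : Type*} [MeasurableSpace α]
    {μ : Measure α} {f g : α → ℝ} (hf : AEMeasurable f μ) (hg : Measurable g) :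
    ‖∫ x, g x * f x ∂μ‖ₑ ≤ ∫⁻ x, ‖g x‖ₑ ∂μ.withDensity fun x => ‖f x‖ₑ := by
  rw [lintegral_withDensity_eq_lintegral_mul₀ hf.enorm hg.enorm.aemeasurable]
  refine (enorm_integral_le_lintegral_enorm _).trans_eq ?_
  simp only [enorm_mul, Pi.mul_apply, mul_comm]

section PoissonIntegral

variable {d : ℕ} {β : ℝ} {μ : Measure (sphere (0 : EuclideanSpace ℝ (Fin (d + 1))) 1)}
  {f : sphere (0 : EuclideanSpace ℝ (Fin (d + 1))) 1 → ℝ}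
  {y : sphere (0 : EuclideanSpace ℝ (Fin (d + 1))) 1} {C : ℝ≥0∞} {r : ℝ}

lemma enorm_poissonIntegral_le (hβ : 0 ≤ β) (hf : AEMeasurable f μ)
    (hC : ∀ ρ, 0 < ρ → μ.withDensity (fun ξ => ‖f ξ‖ₑ) (closedBall y ρ)
      ≤ C * ENNReal.ofReal (ρ ^ ((d : ℝ) - β)))
    (hr₀ : 0 ≤ r) (hr₁ : r < 1) :
    ‖∫ ξ, poissonKernelBall d (r • (y : EuclideanSpace ℝ (Fin (d + 1)))) ξ * f ξ ∂μ‖ₑ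
      ≤ C * ENNReal.ofReal (4 ^ (d + 2) * (1 - r) ^ (-β)) := by
  have hδ : 0 < 1 - r := sub_pos.2 hr₁
  have hy : ‖(y : EuclideanSpace ℝ (Fin (d + 1)))‖ = 1 := norm_eq_of_mem_sphere y
  have hP : Measurable fun ξ : sphere (0 : EuclideanSpace ℝ (Fin (d + 1))) 1 =>
      poissonKernelBall d (r • (y : EuclideanSpace ℝ (Fin (d + 1)))) ξ := by
    unfold poissonKernelBall; fun_prop
  have hry : ‖r • (y : EuclideanSpace ℝ (Fin (d + 1)))‖ ≤ 1 := by
    rw [norm_smul, hy, mul_one, Real.norm_of_nonneg hr₀]; exact hr₁.le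
  calc _ ≤ ∫⁻ ξ, ‖poissonKernelBall d (r • (y : EuclideanSpace ℝ (Fin (d + 1)))) ξ‖ₑ
          ∂μ.withDensity fun ξ => ‖f ξ‖ₑ :=
        enorm_integral_mul_le_lintegral_withDensity hf hP
    _ ≤ ∫⁻ ξ, ENNReal.ofReal (2 ^ (d + 2) * (1 - r)) *
          ENNReal.ofReal ((max (1 - r) (dist ξ y) ^ (d + 1))⁻¹)
          ∂μ.withDensity fun ξ => ‖f ξ‖ₑ := by
        refine lintegral_mono fun ξ => ?_
        rw [Real.enorm_of_nonneg (poissonKernelBall_nonneg hry _),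
          ← ENNReal.ofReal_mul (by positivity)]
        exact ENNReal.ofReal_le_ofReal
          (poissonKernelBall_smul_le hy (norm_eq_of_mem_sphere ξ) hr₀ hr₁)
    _ ≤ ENNReal.ofReal (2 ^ (d + 2) * (1 - r)) *
          (C * ENNReal.ofReal (2 ^ (d + 1 + 1) * (1 - r) ^ ((d : ℝ) - β - (d + 1 : ℕ)))) := by
        rw [lintegral_const_mul' _ _ ENNReal.ofReal_ne_top]
        gcongr
        exact lintegral_inv_max_dist_pow_le _ (by push_cast; linarith) hδ hC
    _ = C * ENNReal.ofReal (4 ^ (d + 2) * (1 - r) ^ (-β)) := by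
        rw [mul_left_comm, ← ENNReal.ofReal_mul (by positivity)]
        congr 2
        rw [show (d : ℝ) - β - (d + 1 : ℕ) = -β - 1 by push_cast; ring, Real.rpow_sub_one hδ.ne',
          show (4 : ℝ) = 2 * 2 by norm_num, mul_pow]
        field_simp

lemma abs_poissonIntegral_mul_rpow_le (hβ : 0 ≤ β) (hf : AEMeasurable f μ) (hC_top : C < ∞)
    (hC : ∀ ρ, 0 < ρ → μ.withDensity (fun ξ => ‖f ξ‖ₑ) (closedBall y ρ)
      ≤ C * ENNReal.ofReal (ρ ^ ((d : ℝ) - β)))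
    (hr₀ : 0 ≤ r) (hr₁ : r < 1) :
    |∫ ξ, poissonKernelBall d (r • (y : EuclideanSpace ℝ (Fin (d + 1)))) ξ * f ξ ∂μ|
      * Real.rpow (1 - r) β ≤ (C * 4 ^ (d + 2)).toReal := by
  have hδ : 0 < 1 - r := sub_pos.2 hr₁
  rw [← ENNReal.ofReal_le_iff_le_toReal (by finiteness), ENNReal.ofReal_mul (abs_nonneg _),
    ← Real.enorm_eq_ofReal_abs, Real.rpow_eq_pow]
  calc _ ≤ C * ENNReal.ofReal (4 ^ (d + 2) * (1 - r) ^ (-β)) * ENNReal.ofReal ((1 - r) ^ β) := by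
        gcongr; exact enorm_poissonIntegral_le hβ hf hC hr₀ hr₁
    _ = C * 4 ^ (d + 2) := by
        rw [mul_assoc, ← ENNReal.ofReal_mul (by positivity), mul_assoc, ← Real.rpow_add hδ,
          neg_add_cancel, Real.rpow_zero, mul_one, ENNReal.ofReal_pow (by norm_num),
          ENNReal.ofReal_ofNat]

end PoissonIntegral

theorem dimH_exceptional_le_of_integrable (d : ℕ) (β : ℝ) (hβ : β ∈ Icc (0 : ℝ) d)
    (f : sphere (0 : EuclideanSpace ℝ (Fin (d + 1))) 1 → ℝ)
    (hf : Integrable f (sphereMeasure d)) :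
    dimH {y : sphere (0 : EuclideanSpace ℝ (Fin (d + 1))) 1 |
        ∀ M : ℝ, ∃ᶠ r in nhdsWithin (1 : ℝ) (Iio 1),
          M < |∫ ξ, poissonKernelBall d (r • (y : EuclideanSpace ℝ (Fin (d + 1)))) ξ * f ξ
                  ∂(sphereMeasure d)| * Real.rpow (1 - r) β}
      ≤ ENNReal.ofReal (d - β) := by
  obtain ⟨hβ₀, hβd⟩ := hβ
  have hs : 0 ≤ (d : ℝ) - β := sub_nonneg.2 hβd
  set ν := (sphereMeasure d).withDensity fun ξ => ‖f ξ‖ₑ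
  have : IsFiniteMeasure ν := isFiniteMeasure_withDensity hf.2.ne
  refine (dimH_mono fun y hy => ?_).trans (dimH_le_of_frequently_measure_closedBall_gt ν hs
    (D := {y | ∃ᶠ δ in 𝓝[>] 0, ENNReal.ofReal (δ ^ ((d : ℝ) - β)) < ν (closedBall y δ)})
    fun _ => id)
  by_contra hy'
  simp only [mem_ofPred_eq, not_frequently, not_lt] at hy'
  obtain ⟨C, hC_top, hC⟩ := exists_measure_closedBall_le_mul_rpow ν hs hy'
  obtain ⟨r, hM, hr₀, hr₁⟩ :=
    ((hy (C * 4 ^ (d + 2)).toReal).and_eventually (Ico_mem_nhdsLT zero_lt_one)).exists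
  exact hM.not_ge (abs_poissonIntegral_mul_rpow_le hβ₀ hf.1.aemeasurable hC_top hC hr₀ hr₁)
end
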